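/- arXiv:1409.0830 — 8 statements merged into one kernel-verified Lean document; each statement's English description precedes it below -/
import Mathlib

section
/- Let g ∈ SL(2,ℝ). If there exist γ ∈ Γ and a ∈ (0,1] such that (gγ)·(1,0)ᵗ = (a,0)ᵗ, then there exist γ' ∈ Γ and (a',b') ∈ Ω₁ such that g·γ' = M_{a',b'}. -/
open Real Matrix MeasureTheory Filter Set

noncomputable section

abbrev SL2 := Matrix.SpecialLinearGroup (Fin 2) ℝ

/-- The elliptic generator R of the Veech group of 𝓛. -/
def Rgen : SL2 := ⟨!![1 + Real.sqrt 2, -(2 + Real.sqrt 2); 1, -1], by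
  rw [Matrix.det_fin_two_of]; ring⟩

/-- The parabolic generator S of the Veech group of 𝓛. -/
def Sgen : SL2 := ⟨!![1, 2 + Real.sqrt 2; 0, 1], by
  rw [Matrix.det_fin_two_of]; ring⟩

/-- The Veech group Γ of the translation surface 𝓛. -/
def Γ : Subgroup SL2 := Subgroup.closure {Rgen, Sgen}

/-- The region Ω₁ = {(a,b) : 0 < a ≤ 1, 1 − (2+√2)a < b ≤ 1}. -/
def Ω₁ : Set (ℝ × ℝ) :=
  {p | 0 < p.1 ∧ p.1 ≤ 1 ∧ 1 - (2 + Real.sqrt 2) * p.1 < p.2 ∧ p.2 ≤ 1}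

lemma Matrix.SpecialLinearGroup.coe_eq_of_mulVec_eq {K : Type*} [Field K]
    (A : SpecialLinearGroup (Fin 2) K) {a : K}
    (h : (A : Matrix (Fin 2) (Fin 2) K) *ᵥ ![1, 0] = ![a, 0]) :
    (A : Matrix (Fin 2) (Fin 2) K) = !![a, (A : Matrix (Fin 2) (Fin 2) K) 0 1; 0, a⁻¹] := by
  have h00 : (A : Matrix (Fin 2) (Fin 2) K) 0 0 = a := by
    simpa [mulVec, dotProduct] using congrFun h 0
  have h10 : (A : Matrix (Fin 2) (Fin 2) K) 1 0 = 0 := by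
    simpa [mulVec, dotProduct] using congrFun h 1
  have hdet := A.det_coe
  rw [det_fin_two, h00, h10] at hdet
  have h11 : (A : Matrix (Fin 2) (Fin 2) K) 1 1 = a⁻¹ :=
    eq_inv_of_mul_eq_one_right (by linear_combination hdet)
  rw [← h11, ← h00, ← h10]
  exact eta_fin_two _

lemma Sgen_zpow (n : ℤ) :
    ((Sgen ^ n : SL2) : Matrix (Fin 2) (Fin 2) ℝ) = !![1, n * (2 + √2); 0, 1] := by
  induction n using Int.induction_on with
  | zero => simp [one_fin_two]
  | succ k ih =>
    rw [_root_.zpow_add_one, Matrix.SpecialLinearGroup.coe_mul, ih, Sgen,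
      Matrix.SpecialLinearGroup.coe_mk, mul_fin_two]
    push_cast
    ring_nf
  | pred k ih =>
    rw [_root_.zpow_sub_one, Matrix.SpecialLinearGroup.coe_mul, ih,
      Matrix.SpecialLinearGroup.coe_inv, Sgen, Matrix.SpecialLinearGroup.coe_mk,
      adjugate_fin_two_of, mul_fin_two]
    push_cast
    ring_nf

/-- If some gγ (γ ∈ Γ) sends (1,0) to a horizontal vector (a,0) with 0 < a ≤ 1, then a suitable
Γ-translate of g is of the form M_{a',b'} with (a',b') ∈ Ω₁. -/
theorem surface_in_Omega1 (g : SL2)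
    (h : ∃ γ ∈ Γ, ∃ a : ℝ, 0 < a ∧ a ≤ 1 ∧
      Matrix.mulVec ((g * γ : SL2) : Matrix (Fin 2) (Fin 2) ℝ) ![1, 0] = ![a, 0]) :
    ∃ γ' ∈ Γ, ∃ p ∈ Ω₁,
      ((g * γ' : SL2) : Matrix (Fin 2) (Fin 2) ℝ) = !![p.1, p.2; 0, p.1⁻¹] := by
  obtain ⟨γ, hγ, a, ha0, ha1, hv⟩ := h
  have hM := (g * γ).coe_eq_of_mulVec_eq hv
  set b := ((g * γ : SL2) : Matrix (Fin 2) (Fin 2) ℝ) 0 1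
  -- right multiplication by `Sgen ^ (-n)` shifts `b` by `-n (2 + √2) a`
  have hc : 0 < (2 + √2) * a := by positivity
  obtain ⟨n, ⟨hn₁, hn₂⟩, -⟩ := existsUnique_sub_zsmul_mem_Ioc hc b (1 - (2 + √2) * a)
  refine ⟨γ * Sgen ^ (-n), mul_mem hγ (zpow_mem (Subgroup.subset_closure (by simp)) _),
    (a, b - n • ((2 + √2) * a)), ⟨ha0, ha1, hn₁, by linarith⟩, ?_⟩
  rw [← mul_assoc, Matrix.SpecialLinearGroup.coe_mul, hM, Sgen_zpow, mul_fin_two]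
  push_cast
  ring_nf
end
end

section
/- Let g ∈ SL(2,ℝ). If there exist γ ∈ Γ and a ∈ (0,1] such that (gγ)·(0,1)ᵗ = (a,0)ᵗ, then there exist γ' ∈ Γ and (a',b') ∈ Ω₂ such that g·γ' = M_{a',b'}·Rot, where Rot = [[0,1],[−1,0]]. -/
open Real Matrix MeasureTheory Filter Set

noncomputable section

/-- The region Ω₂ = {(a,b) : 0 < a ≤ 1, 1 − a < b ≤ 1}. -/
def Ω₂ : Set (ℝ × ℝ) := {p | 0 < p.1 ∧ p.1 ≤ 1 ∧ 1 - p.1 < p.2 ∧ p.2 ≤ 1}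

/-- The rotation by π/2 in the clockwise direction. -/
def Rot : Matrix (Fin 2) (Fin 2) ℝ := !![0, 1; -1, 0]

/-!
A matrix of determinant one sending `(0,1)` to `(a,0)` is `[[c, a], [-1/a, 0]]`. The element
`P = R³S` of `Γ` is the lower unipotent `[[1,0],[1,1]]`, and right multiplication by `Pᵐ`
changes `c` into `c + m a`. Choosing `m` so that `-(c + m a)` lands in the interval `(1 - a, 1]` of
length `a` gives `M_{a,b} · Rot` with `b = -(c + m a)` and `(a, b) ∈ Ω₂`.
-/

namespace Matrix.SpecialLinearGroup

variable {R : Type*}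

lemma coe_zpow_of_coe_eq_lowerUnipotent [CommRing R] {P : SpecialLinearGroup (Fin 2) R}
    (hP : (P : Matrix (Fin 2) (Fin 2) R) = !![1, 0; 1, 1]) (k : ℤ) :
    ((P ^ k : SpecialLinearGroup (Fin 2) R) : Matrix (Fin 2) (Fin 2) R) = !![1, 0; (k : R), 1] := by
  have coe_inv :
      ((P⁻¹ : SpecialLinearGroup (Fin 2) R) : Matrix (Fin 2) (Fin 2) R) = !![1, 0; -1, 1] := by
    simp [coe_inv, hP, adjugate_fin_two_of]
  induction k using Int.induction_on with
  | zero => simp [one_fin_two]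
  | succ n ih =>
    rw [_root_.zpow_add_one, coe_mul, ih, hP, mul_fin_two]
    simp
  | pred n ih =>
    rw [_root_.zpow_sub_one, coe_mul, ih, coe_inv, mul_fin_two]
    simp [sub_eq_add_neg]

lemma coe_eq_of_mulVec_eq_s6 [Field R] (M : SpecialLinearGroup (Fin 2) R) {a : R}
    (h : (M : Matrix (Fin 2) (Fin 2) R) *ᵥ ![0, 1] = ![a, 0]) :
    (M : Matrix (Fin 2) (Fin 2) R) = !![M 0 0, a; -a⁻¹, 0] := by
  have h01 : M 0 1 = a := by simpa [mulVec, dotProduct] using congrFun h 0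
  have h11 : M 1 1 = 0 := by simpa [mulVec, dotProduct] using congrFun h 1
  have hdet : M 0 0 * M 1 1 - M 0 1 * M 1 0 = 1 := by rw [← det_fin_two]; exact M.2
  have ha : a ≠ 0 := by rintro rfl; simp [h01, h11] at hdet
  have h10 : M 1 0 = -a⁻¹ := by
    field_simp
    linear_combination -hdet + M 0 0 * h11 - M 1 0 * h01
  conv_lhs => rw [eta_fin_two (M : Matrix (Fin 2) (Fin 2) R), h01, h10, h11]

end Matrix.SpecialLinearGroup

def Pgen : SL2 := Rgen ^ 3 * Sgen

lemma Pgen_mem : Pgen ∈ Γ :=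
  mul_mem (pow_mem (Subgroup.subset_closure (by simp)) 3) (Subgroup.subset_closure (by simp))

lemma coe_Pgen : (Pgen : Matrix (Fin 2) (Fin 2) ℝ) = !![1, 0; 1, 1] := by
  have h2 : √2 ^ 2 = 2 := Real.sq_sqrt zero_le_two
  have h3 : √2 ^ 3 = 2 * √2 := by rw [pow_succ, h2]
  have h4 : √2 ^ 4 = 4 := by rw [pow_succ, h3]; linear_combination 2 * h2
  rw [Pgen, Matrix.SpecialLinearGroup.coe_mul, Matrix.SpecialLinearGroup.coe_pow, pow_three]
  simp only [Rgen, Sgen, mul_fin_two]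
  ext i j
  fin_cases i <;> fin_cases j <;> (simp; ring_nf; simp only [h2, h3, h4]; ring)

lemma upper_mul_Rot (a b : ℝ) : !![a, b; 0, a⁻¹] * Rot = !![-b, a; -a⁻¹, 0] := by
  simp [Rot]

/-- If some gγ (γ ∈ Γ) sends (0,1) to a horizontal vector (a,0) with 0 < a ≤ 1, then a suitable
Γ-translate of g is of the form M_{a',b'}·Rot with (a',b') ∈ Ω₂. -/
theorem surface_in_Omega2 (g : SL2)
    (h : ∃ γ ∈ Γ, ∃ a : ℝ, 0 < a ∧ a ≤ 1 ∧
      Matrix.mulVec ((g * γ : SL2) : Matrix (Fin 2) (Fin 2) ℝ) ![0, 1] = ![a, 0]) :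
    ∃ γ' ∈ Γ, ∃ p ∈ Ω₂,
      ((g * γ' : SL2) : Matrix (Fin 2) (Fin 2) ℝ) = !![p.1, p.2; 0, p.1⁻¹] * Rot := by
  obtain ⟨γ, hγ, a, ha0, ha1, hvec⟩ := h
  obtain ⟨m, ⟨hm1, hm2⟩, -⟩ := existsUnique_sub_zsmul_mem_Ioc ha0 (-(g * γ) 0 0) (1 - a)
  refine ⟨γ * Pgen ^ m, mul_mem hγ (zpow_mem Pgen_mem m), (a, -(g * γ) 0 0 - m • a),
    ⟨ha0, ha1, hm1, by linarith⟩, ?_⟩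
  have hcoe : ((g * (γ * Pgen ^ m) : SL2) : Matrix (Fin 2) (Fin 2) ℝ)
      = ((g * γ : SL2) : Matrix (Fin 2) (Fin 2) ℝ) * !![1, 0; (m : ℝ), 1] := by
    rw [← mul_assoc, Matrix.SpecialLinearGroup.coe_mul,
      Matrix.SpecialLinearGroup.coe_zpow_of_coe_eq_lowerUnipotent coe_Pgen]
  rw [hcoe, Matrix.SpecialLinearGroup.coe_eq_of_mulVec_eq_s6 _ hvec, upper_mul_Rot, mul_fin_two]
  simp [zsmul_eq_mul]
  ring
end
end

section
/- For every (a,b) ∈ ℝ² with 0 < a ≤ 1 and 1 − (1+√2)a < b ≤ (1 − (1+√2)a)/√2 (a region which is nonempty only when a > √2 − 1), the set P(a,b) of positive slopes of vectors of M_{a,b}·Λ lying in the vertical strip (0,1] × (0,∞) has a least element, and this least element equals √2/(a((1+√2)a + √2·b)). (This is the return time of the horocycle flow on the subregion Ω_HF of the Poincaré section.) -/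
open Real Matrix MeasureTheory Filter Set

noncomputable section

/-- Linear action of a 2×2 matrix on ℝ². -/
def act (g : Matrix (Fin 2) (Fin 2) ℝ) (v : ℝ × ℝ) : ℝ × ℝ :=
  (g 0 0 * v.1 + g 0 1 * v.2, g 1 0 * v.1 + g 1 1 * v.2)

/-- The set of holonomy vectors of saddle connections of 𝓛. -/
def Lambda : Set (ℝ × ℝ) :=
  {v | ∃ γ ∈ Γ, v = act (γ : Matrix (Fin 2) (Fin 2) ℝ) (1, 0)} ∪
  {v | ∃ γ ∈ Γ, v = act (γ : Matrix (Fin 2) (Fin 2) ℝ) (1 + Real.sqrt 2, 0)} ∪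
  {v | ∃ γ ∈ Γ, v = act (γ : Matrix (Fin 2) (Fin 2) ℝ) (0, 1)} ∪
  {v | ∃ γ ∈ Γ, v = act (γ : Matrix (Fin 2) (Fin 2) ℝ) (0, Real.sqrt 2)}

/-- The matrix M_{a,b} = [[a,b],[0,a⁻¹]]. -/
def Mmat (a b : ℝ) : Matrix (Fin 2) (Fin 2) ℝ := !![a, b; 0, a⁻¹]

/-- P(a,b): the set of positive slopes of vectors of M_{a,b}·Λ in the vertical strip
(0,1] × (0,∞). -/
def P (a b : ℝ) : Set ℝ :=
  {s | ∃ u ∈ Lambda, 0 < (act (Mmat a b) u).1 ∧ (act (Mmat a b) u).1 ≤ 1 ∧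
      0 < (act (Mmat a b) u).2 ∧ s = (act (Mmat a b) u).2 / (act (Mmat a b) u).1}

/-! ### auxiliary setup -/

local notation "√2" => Real.sqrt 2

lemma s2 : √2 * √2 = 2 := Real.mul_self_sqrt (by norm_num)
lemma s2pos : (0:ℝ) < √2 := Real.sqrt_pos.mpr (by norm_num)
lemma s2gt1 : (1:ℝ) < √2 := by nlinarith [s2, s2pos]
lemma s2lt : √2 < 3/2 := by nlinarith [s2, s2pos]

/-- linear maps for the generators -/
def mR (v : ℝ × ℝ) : ℝ × ℝ := ((1+√2)*v.1 - (2+√2)*v.2, v.1 - v.2)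
def mS (v : ℝ × ℝ) : ℝ × ℝ := (v.1 + (2+√2)*v.2, v.2)
def mSi (v : ℝ × ℝ) : ℝ × ℝ := (v.1 - (2+√2)*v.2, v.2)
def mRi (v : ℝ × ℝ) : ℝ × ℝ := (-v.1 + (2+√2)*v.2, -v.1 + (1+√2)*v.2)

lemma pair_eq {a b c d : ℝ} (h1 : a = c) (h2 : b = d) : (a, b) = (c, d) := by rw [h1, h2]

lemma mS_mSi (v : ℝ × ℝ) : mS (mSi v) = v := by
  obtain ⟨x, y⟩ := v; exact pair_eq (by simp only [mS, mSi]; ring) (by simp only [mS, mSi])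
lemma mSi_mS (v : ℝ × ℝ) : mSi (mS v) = v := by
  obtain ⟨x, y⟩ := v; exact pair_eq (by simp only [mS, mSi]; ring) (by simp only [mS, mSi])
lemma mS_neg (v : ℝ × ℝ) : mS (-v) = -(mS v) := by
  obtain ⟨x, y⟩ := v
  simp only [mS, Prod.neg_mk]; exact pair_eq (by ring) (by ring)
lemma mSi_neg (v : ℝ × ℝ) : mSi (-v) = -(mSi v) := by
  obtain ⟨x, y⟩ := v
  simp only [mSi, Prod.neg_mk]; exact pair_eq (by ring) (by ring)
lemma mR_neg (v : ℝ × ℝ) : mR (-v) = -(mR v) := by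
  obtain ⟨x, y⟩ := v
  simp only [mR, Prod.neg_mk]; exact pair_eq (by ring) (by ring)
lemma mR4 (v : ℝ × ℝ) : mR (mR (mR (mR v))) = -v := by
  obtain ⟨x, y⟩ := v
  simp only [mR, Prod.neg_mk]
  refine pair_eq ?_ ?_
  · linear_combination ((-2)*y*√2 + (-1)*y*√2*√2 + (-1)*x + x*√2 + x*√2*√2) * s2
  · linear_combination ((-1)*y + (-1)*y*√2 + x*√2) * s2
lemma mRi_eq (v : ℝ × ℝ) : mRi v = -(mR (mR (mR v))) := by
  obtain ⟨x, y⟩ := v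
  simp only [mR, mRi, Prod.neg_mk]
  refine pair_eq ?_ ?_
  · linear_combination ((2)*y + y*√2 + (-1)*x + (-1)*x*√2) * (-1 * s2)
  · linear_combination (y + (-1)*x) * (-1 * s2)

inductive St | H | V | E1 | E2 | E3 | E4 | E5 | E6 | J0 | NEG | K1 | K2 | K3 | K4 | K5 | K6

def IsSrc : St → Prop := fun σ => match σ with
  | .H | .V | .J0 | .NEG => False
  | _ => True

def IsSrcN : St → Prop := fun σ => match σ with
  | .H | .V | .J0 | .NEG | .E1 => False
  | _ => True

inductive Good : St → ℝ × ℝ → Prop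
  | gH (t ε : ℝ) (ht : 1 ≤ t) (hε : ε = 1 ∨ ε = -1) : Good .H (ε * t, 0)
  | gV (t ε : ℝ) (ht : 1 ≤ t) (hε : ε = 1 ∨ ε = -1) : Good .V (0, ε * t)
  | gE1 (t ε : ℝ) (ht : 1 ≤ t) (hε : ε = 1 ∨ ε = -1) : Good .E1 (ε * ((2+√2)*t), ε * t)
  | gE2 (t ε : ℝ) (ht : 1 ≤ t) (hε : ε = 1 ∨ ε = -1) : Good .E2 (ε * ((1+√2)*t), ε * t)
  | gE3 (t ε : ℝ) (ht : 1+√2 ≤ t) (hε : ε = 1 ∨ ε = -1) : Good .E3 (ε * (2*t), ε * t)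
  | gE4 (t ε : ℝ) (ht : 1 ≤ t) (hε : ε = 1 ∨ ε = -1) : Good .E4 (ε * ((1+√2)*t), ε * (√2*t))
  | gE5 (t ε : ℝ) (ht : 1+√2 ≤ t) (hε : ε = 1 ∨ ε = -1) : Good .E5 (ε * (√2*t), ε * t)
  | gE6 (t ε : ℝ) (ht : 1 ≤ t) (hε : ε = 1 ∨ ε = -1) : Good .E6 (ε * t, ε * t)
  | gJ0 (σ : St) (w : ℝ × ℝ) (hw : Good σ w) (hσ : IsSrc σ) : Good .J0 (mS w)
  | gJ0S (w : ℝ × ℝ) (hw : Good .J0 w) : Good .J0 (mS w)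
  | gN1 (σ : St) (w : ℝ × ℝ) (hw : Good σ w) (hσ : IsSrcN σ) : Good .NEG (mSi w)
  | gNS (w : ℝ × ℝ) (hw : Good .NEG w) : Good .NEG (mSi w)
  | gNV (w : ℝ × ℝ) (hw : Good .V w) : Good .NEG (mSi w)
  | gK1 (w : ℝ × ℝ) (hw : Good .NEG w) : Good .K1 (mR w)
  | gK2 (w : ℝ × ℝ) (hw : Good .J0 w) : Good .K2 (mR w)
  | gK3 (w : ℝ × ℝ) (hw : Good .K1 w) : Good .K3 (mR w)
  | gK4 (w : ℝ × ℝ) (hw : Good .K2 w) : Good .K4 (mR w)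
  | gK5 (w : ℝ × ℝ) (hw : Good .K3 w) : Good .K5 (mR w)
  | gK6 (w : ℝ × ℝ) (hw : Good .K4 w) : Good .K6 (mR w)

lemma good_neg {σ : St} {v : ℝ × ℝ} (h : Good σ v) : Good σ (-v) := by
  induction h with
  | gH t ε ht hε =>
      have : -((ε*t : ℝ), (0:ℝ)) = ((-ε) * t, 0) := by
        rw [Prod.neg_mk]; exact pair_eq (by ring) (by ring)
      rw [this]; exact .gH t (-ε) ht (by rcases hε with h|h <;> simp [h])
  | gV t ε ht hε =>
      have : -((0:ℝ), (ε*t : ℝ)) = (0, (-ε) * t) := by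
        rw [Prod.neg_mk]; exact pair_eq (by ring) (by ring)
      rw [this]; exact .gV t (-ε) ht (by rcases hε with h|h <;> simp [h])
  | gE1 t ε ht hε =>
      have : -((ε*((2+√2)*t) : ℝ), (ε*t : ℝ)) = ((-ε) * ((2+√2)*t), (-ε) * t) := by
        rw [Prod.neg_mk]; exact pair_eq (by ring) (by ring)
      rw [this]; exact .gE1 t (-ε) ht (by rcases hε with h|h <;> simp [h])
  | gE2 t ε ht hε =>
      have : -((ε*((1+√2)*t) : ℝ), (ε*t : ℝ)) = ((-ε) * ((1+√2)*t), (-ε) * t) := by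
        rw [Prod.neg_mk]; exact pair_eq (by ring) (by ring)
      rw [this]; exact .gE2 t (-ε) ht (by rcases hε with h|h <;> simp [h])
  | gE3 t ε ht hε =>
      have : -((ε*(2*t) : ℝ), (ε*t : ℝ)) = ((-ε) * (2*t), (-ε) * t) := by
        rw [Prod.neg_mk]; exact pair_eq (by ring) (by ring)
      rw [this]; exact .gE3 t (-ε) ht (by rcases hε with h|h <;> simp [h])
  | gE4 t ε ht hε =>
      have : -((ε*((1+√2)*t) : ℝ), (ε*(√2*t) : ℝ)) = ((-ε) * ((1+√2)*t), (-ε) * (√2*t)) := by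
        rw [Prod.neg_mk]; exact pair_eq (by ring) (by ring)
      rw [this]; exact .gE4 t (-ε) ht (by rcases hε with h|h <;> simp [h])
  | gE5 t ε ht hε =>
      have : -((ε*(√2*t) : ℝ), (ε*t : ℝ)) = ((-ε) * (√2*t), (-ε) * t) := by
        rw [Prod.neg_mk]; exact pair_eq (by ring) (by ring)
      rw [this]; exact .gE5 t (-ε) ht (by rcases hε with h|h <;> simp [h])
  | gE6 t ε ht hε =>
      have : -((ε*t : ℝ), (ε*t : ℝ)) = ((-ε) * t, (-ε) * t) := by
        rw [Prod.neg_mk]; exact pair_eq (by ring) (by ring)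
      rw [this]; exact .gE6 t (-ε) ht (by rcases hε with h|h <;> simp [h])
  | gJ0 σ w hw hσ ih => rw [← mS_neg]; exact .gJ0 σ (-w) ih hσ
  | gJ0S w hw ih => rw [← mS_neg]; exact .gJ0S (-w) ih
  | gN1 σ w hw hσ ih => rw [← mSi_neg]; exact .gN1 σ (-w) ih hσ
  | gNS w hw ih => rw [← mSi_neg]; exact .gNS (-w) ih
  | gNV w hw ih => rw [← mSi_neg]; exact .gNV (-w) ih
  | gK1 w hw ih => rw [← mR_neg]; exact .gK1 (-w) ih
  | gK2 w hw ih => rw [← mR_neg]; exact .gK2 (-w) ih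
  | gK3 w hw ih => rw [← mR_neg]; exact .gK3 (-w) ih
  | gK4 w hw ih => rw [← mR_neg]; exact .gK4 (-w) ih
  | gK5 w hw ih => rw [← mR_neg]; exact .gK5 (-w) ih
  | gK6 w hw ih => rw [← mR_neg]; exact .gK6 (-w) ih

/-! ### coarse facts for each state -/

def F : St → ℝ × ℝ → Prop := fun σ v => match σ with
  | .H => ∃ t, 1 ≤ t ∧ v = (t, 0)
  | .V => ∃ t, 1 ≤ t ∧ v = (0, t)
  | .E1 => ∃ t, 1 ≤ t ∧ v = ((2+√2)*t, t)
  | .E2 => ∃ t, 1 ≤ t ∧ v = ((1+√2)*t, t)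
  | .E3 => ∃ t, 1+√2 ≤ t ∧ v = (2*t, t)
  | .E4 => ∃ t, 1 ≤ t ∧ v = ((1+√2)*t, √2*t)
  | .E5 => ∃ t, 1+√2 ≤ t ∧ v = (√2*t, t)
  | .E6 => ∃ t, 1 ≤ t ∧ v = (t, t)
  | .J0 => 1 ≤ v.2 ∧ (2+√2)*v.2 + 1 ≤ v.1
  | .NEG => 1 ≤ v.2 ∧ v.1 < 0
  | .K1 => 2+√2 ≤ v.1 ∧ 1 ≤ v.2 ∧ 2 ≤ v.1 - √2*v.2 ∧ 1 ≤ v.1 - (1+√2)*v.2 ∧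
      v.1 < (2+√2)*v.2
  | .K2 => 1+√2 ≤ v.1 ∧ 1 ≤ v.2 ∧ √2-1 ≤ v.1 - 2*v.2 ∧ 1 ≤ (1+√2)*v.2 - v.1 ∧
      2 ≤ √2*v.1 - (1+√2)*v.2 ∧ v.1 < (2+√2)*v.2
  | .K3 => 2+2*√2 ≤ v.1 ∧ 1 ≤ v.2 ∧ √2 ≤ v.1 - √2*v.2 ∧ 1 ≤ √2*v.1 - (1+√2)*v.2 ∧
      v.1 < 2*v.2 ∧ v.1 < (2+√2)*v.2
  | .K4 => 1 ≤ v.1 ∧ 1 ≤ v.2 ∧ √2*v.1 < (1+√2)*v.2 ∧ v.1 < (2+√2)*v.2 ∧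
      1 ≤ (1+√2)*v.1 - (2+√2)*v.2 ∧ 2 ≤ v.1 - v.2
  | .K5 => 1 ≤ v.1 ∧ 1 ≤ v.2 ∧ √2*v.1 < (1+√2)*v.2 ∧ v.1 < (2+√2)*v.2
  | .K6 => 1 ≤ v.1 ∧ 1 ≤ v.2 ∧ √2*v.1 < (1+√2)*v.2 ∧ v.1 < (2+√2)*v.2

lemma src_bounds {σ : St} {v : ℝ × ℝ} (hσ : IsSrc σ) (h : F σ v) :
    1 ≤ v.1 ∧ 1 ≤ v.2 ∧ v.1 ≤ (2+√2)*v.2 := by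
  have h1 := s2gt1; have h2 := s2
  cases σ <;> simp only [IsSrc] at hσ <;> simp only [F] at h
  case E1 => obtain ⟨t, ht, rfl⟩ := h; dsimp only; refine ⟨by nlinarith, by nlinarith, by nlinarith⟩
  case E2 => obtain ⟨t, ht, rfl⟩ := h; dsimp only; refine ⟨by nlinarith, by nlinarith, by nlinarith⟩
  case E3 => obtain ⟨t, ht, rfl⟩ := h; dsimp only; refine ⟨by nlinarith, by nlinarith, by nlinarith⟩
  case E4 => obtain ⟨t, ht, rfl⟩ := h; dsimp only; refine ⟨by nlinarith, by nlinarith, by nlinarith⟩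
  case E5 => obtain ⟨t, ht, rfl⟩ := h; dsimp only; refine ⟨by nlinarith, by nlinarith, by nlinarith⟩
  case E6 => obtain ⟨t, ht, rfl⟩ := h; dsimp only; refine ⟨by nlinarith, by nlinarith, by nlinarith⟩
  case K1 => exact ⟨by nlinarith [h.1], h.2.1, by nlinarith [h.2.2.2.2]⟩
  case K2 => exact ⟨by nlinarith [h.1], h.2.1, by nlinarith [h.2.2.2.2.2]⟩
  case K3 => exact ⟨by nlinarith [h.1], h.2.1, by nlinarith [h.2.2.2.2.2]⟩
  case K4 => exact ⟨h.1, h.2.1, by nlinarith [h.2.2.2.1]⟩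
  case K5 => exact ⟨h.1, h.2.1, by nlinarith [h.2.2.2]⟩
  case K6 => exact ⟨h.1, h.2.1, by nlinarith [h.2.2.2]⟩

lemma srcN_strict {σ : St} {v : ℝ × ℝ} (hσ : IsSrcN σ) (h : F σ v) :
    v.1 < (2+√2)*v.2 := by
  have h1 := s2gt1; have h2 := s2
  cases σ <;> simp only [IsSrcN] at hσ <;> simp only [F] at h
  case E2 => obtain ⟨t, ht, rfl⟩ := h; dsimp only; nlinarith
  case E3 => obtain ⟨t, ht, rfl⟩ := h; dsimp only; nlinarith
  case E4 => obtain ⟨t, ht, rfl⟩ := h; dsimp only; nlinarith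
  case E5 => obtain ⟨t, ht, rfl⟩ := h; dsimp only; nlinarith
  case E6 => obtain ⟨t, ht, rfl⟩ := h; dsimp only; nlinarith
  case K1 => exact h.2.2.2.2
  case K2 => exact h.2.2.2.2.2
  case K3 => exact h.2.2.2.2.2
  case K4 => exact h.2.2.2.1
  case K5 => exact h.2.2.2
  case K6 => exact h.2.2.2

lemma repJ0 {σ : St} {w : ℝ × ℝ} (hσ : IsSrc σ) (h : F σ w) : F .J0 (mS w) := by
  obtain ⟨hx, hy, _⟩ := src_bounds hσ h
  exact ⟨hy, by simp only [mS]; nlinarith⟩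

lemma repJ0S {w : ℝ × ℝ} (h : F .J0 w) : F .J0 (mS w) := by
  obtain ⟨hy, hx⟩ := h
  have h1 := s2gt1
  exact ⟨hy, by simp only [mS]; nlinarith⟩

lemma repN1 {σ : St} {w : ℝ × ℝ} (hσ : IsSrcN σ) (h : F σ w) : F .NEG (mSi w) := by
  have hs := srcN_strict hσ h
  have hb := src_bounds (by cases σ <;> simp_all [IsSrc, IsSrcN]) h
  exact ⟨hb.2.1, by simp only [mSi]; nlinarith⟩

lemma repNS {w : ℝ × ℝ} (h : F .NEG w) : F .NEG (mSi w) := by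
  have h1 := s2gt1
  exact ⟨h.1, by simp only [mSi]; nlinarith [h.1, h.2]⟩

lemma repNV {w : ℝ × ℝ} (h : F .V w) : F .NEG (mSi w) := by
  obtain ⟨t, ht, rfl⟩ := h
  have h1 := s2gt1
  exact ⟨ht, by simp only [mSi]; nlinarith⟩

lemma repK1 {w : ℝ × ℝ} (h : F .NEG w) : F .K1 (-(mR w)) := by
  obtain ⟨hy, hx⟩ := h
  obtain ⟨x, y⟩ := w
  simp only at hy hx
  have h1 := s2gt1; have h2 := s2
  simp only [F, mR, Prod.neg_mk]
  refine ⟨by nlinarith, by nlinarith, by nlinarith, by nlinarith, by nlinarith⟩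

lemma repK2 {w : ℝ × ℝ} (h : F .J0 w) : F .K2 (mR w) := by
  obtain ⟨hy, hx⟩ := h
  obtain ⟨x, y⟩ := w
  simp only at hy hx
  have h1 := s2gt1; have h2 := s2
  have key : √2*((1+√2)*x-(2+√2)*y) - (1+√2)*(x-y) = x - (1+√2)*y := by
    linear_combination (x - y) * s2
  simp only [F, mR]
  refine ⟨by nlinarith, by nlinarith, by nlinarith, by nlinarith, by nlinarith [key], by nlinarith⟩

lemma repK3 {w : ℝ × ℝ} (h : F .K1 w) : F .K3 (mR w) := by
  obtain ⟨f1, f2, f3, f4, f5⟩ := h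
  obtain ⟨x, y⟩ := w
  simp only at f1 f2 f3 f4 f5
  have h1 := s2gt1; have h2 := s2
  simp only [F, mR]
  refine ⟨by nlinarith, by nlinarith, by nlinarith, by nlinarith, by nlinarith, by nlinarith⟩

lemma repK4 {w : ℝ × ℝ} (h : F .K2 w) : F .K4 (mR w) := by
  obtain ⟨f1, f2, f3, f4, f5, f6⟩ := h
  obtain ⟨x, y⟩ := w
  simp only at f1 f2 f3 f4 f5 f6
  have h1 := s2gt1; have h2 := s2
  simp only [F, mR]
  refine ⟨by nlinarith, by nlinarith, by nlinarith, by nlinarith, by nlinarith, by nlinarith⟩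

lemma repK5 {w : ℝ × ℝ} (h : F .K3 w) : F .K5 (mR w) := by
  obtain ⟨f1, f2, f3, f4, f5, f6⟩ := h
  obtain ⟨x, y⟩ := w
  simp only at f1 f2 f3 f4 f5 f6
  have h1 := s2gt1; have h2 := s2
  simp only [F, mR]
  refine ⟨by nlinarith, by nlinarith, by nlinarith, by nlinarith⟩

lemma repK6 {w : ℝ × ℝ} (h : F .K4 w) : F .K6 (mR w) := by
  obtain ⟨f1, f2, f3, f4, f5, f6⟩ := h
  obtain ⟨x, y⟩ := w
  simp only at f1 f2 f3 f4 f5 f6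
  have h1 := s2gt1; have h2 := s2
  simp only [F, mR]
  refine ⟨by nlinarith, by nlinarith, by nlinarith, by nlinarith⟩

lemma facts {σ : St} {v : ℝ × ℝ} (h : Good σ v) : F σ v ∨ F σ (-v) := by
  induction h with
  | gH t ε ht hε =>
      rcases hε with rfl|rfl
      · exact Or.inl ⟨t, ht, pair_eq (by ring) (by ring)⟩
      · refine Or.inr ⟨t, ht, ?_⟩
        rw [Prod.neg_mk]; exact pair_eq (by ring) (by ring)
  | gV t ε ht hε =>
      rcases hε with rfl|rfl
      · exact Or.inl ⟨t, ht, pair_eq (by ring) (by ring)⟩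
      · refine Or.inr ⟨t, ht, ?_⟩
        rw [Prod.neg_mk]; exact pair_eq (by ring) (by ring)
  | gE1 t ε ht hε =>
      rcases hε with rfl|rfl
      · exact Or.inl ⟨t, ht, pair_eq (by ring) (by ring)⟩
      · refine Or.inr ⟨t, ht, ?_⟩
        rw [Prod.neg_mk]; exact pair_eq (by ring) (by ring)
  | gE2 t ε ht hε =>
      rcases hε with rfl|rfl
      · exact Or.inl ⟨t, ht, pair_eq (by ring) (by ring)⟩
      · refine Or.inr ⟨t, ht, ?_⟩
        rw [Prod.neg_mk]; exact pair_eq (by ring) (by ring)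
  | gE3 t ε ht hε =>
      rcases hε with rfl|rfl
      · exact Or.inl ⟨t, ht, pair_eq (by ring) (by ring)⟩
      · refine Or.inr ⟨t, ht, ?_⟩
        rw [Prod.neg_mk]; exact pair_eq (by ring) (by ring)
  | gE4 t ε ht hε =>
      rcases hε with rfl|rfl
      · exact Or.inl ⟨t, ht, pair_eq (by ring) (by ring)⟩
      · refine Or.inr ⟨t, ht, ?_⟩
        rw [Prod.neg_mk]; exact pair_eq (by ring) (by ring)
  | gE5 t ε ht hε =>
      rcases hε with rfl|rfl
      · exact Or.inl ⟨t, ht, pair_eq (by ring) (by ring)⟩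
      · refine Or.inr ⟨t, ht, ?_⟩
        rw [Prod.neg_mk]; exact pair_eq (by ring) (by ring)
  | gE6 t ε ht hε =>
      rcases hε with rfl|rfl
      · exact Or.inl ⟨t, ht, pair_eq (by ring) (by ring)⟩
      · refine Or.inr ⟨t, ht, ?_⟩
        rw [Prod.neg_mk]; exact pair_eq (by ring) (by ring)
  | gJ0 σ w hw hσ ih =>
      rcases ih with h|h
      · exact Or.inl (repJ0 hσ h)
      · exact Or.inr (by rw [← mS_neg]; exact repJ0 hσ h)
  | gJ0S w hw ih =>
      rcases ih with h|h
      · exact Or.inl (repJ0S h)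
      · exact Or.inr (by rw [← mS_neg]; exact repJ0S h)
  | gN1 σ w hw hσ ih =>
      rcases ih with h|h
      · exact Or.inl (repN1 hσ h)
      · exact Or.inr (by rw [← mSi_neg]; exact repN1 hσ h)
  | gNS w hw ih =>
      rcases ih with h|h
      · exact Or.inl (repNS h)
      · exact Or.inr (by rw [← mSi_neg]; exact repNS h)
  | gNV w hw ih =>
      rcases ih with h|h
      · exact Or.inl (repNV h)
      · exact Or.inr (by rw [← mSi_neg]; exact repNV h)
  | gK1 w hw ih =>
      rcases ih with h|h
      · exact Or.inr (repK1 h)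
      · exact Or.inl (by have := repK1 h; rwa [mR_neg, neg_neg] at this)
  | gK2 w hw ih =>
      rcases ih with h|h
      · exact Or.inl (repK2 h)
      · exact Or.inr (by rw [← mR_neg]; exact repK2 h)
  | gK3 w hw ih =>
      rcases ih with h|h
      · exact Or.inl (repK3 h)
      · exact Or.inr (by rw [← mR_neg]; exact repK3 h)
  | gK4 w hw ih =>
      rcases ih with h|h
      · exact Or.inl (repK4 h)
      · exact Or.inr (by rw [← mR_neg]; exact repK4 h)
  | gK5 w hw ih =>
      rcases ih with h|h
      · exact Or.inl (repK5 h)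
      · exact Or.inr (by rw [← mR_neg]; exact repK5 h)
  | gK6 w hw ih =>
      rcases ih with h|h
      · exact Or.inl (repK6 h)
      · exact Or.inr (by rw [← mR_neg]; exact repK6 h)

/-- The key avoidance property: Good vectors in the open cone 0 < y < (2-√2)x have
x ≥ 1+√2 and x - √2 y ≥ 1. -/
lemma good_avoid {σ : St} {v : ℝ × ℝ} (h : Good σ v) (hy : 0 < v.2)
    (hc : (1+√2) * v.2 < √2 * v.1) : 1+√2 ≤ v.1 ∧ 1 ≤ v.1 - √2 * v.2 := by
  have h1 := s2gt1; have h2 := s2; have h0 := s2pos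
  obtain ⟨x, y⟩ := v
  simp only at hy hc ⊢
  rcases facts h with hf|hf
  · clear h
    cases σ <;> simp only [F] at hf
    case H => obtain ⟨t, ht, h⟩ := hf; exfalso; rw [Prod.mk.injEq] at h; linarith [h.2 ▸ hy]
    case V =>
        obtain ⟨t, ht, h⟩ := hf; exfalso; rw [Prod.mk.injEq] at h
        obtain ⟨h1', h2'⟩ := h; subst h1'; subst h2'; nlinarith
    case E1 =>
        obtain ⟨t, ht, h⟩ := hf; rw [Prod.mk.injEq] at h
        obtain ⟨h1', h2'⟩ := h; subst h1'; subst h2'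
        constructor <;> nlinarith
    case E2 =>
        obtain ⟨t, ht, h⟩ := hf; rw [Prod.mk.injEq] at h
        obtain ⟨h1', h2'⟩ := h; subst h1'; subst h2'
        constructor <;> nlinarith
    case E3 =>
        obtain ⟨t, ht, h⟩ := hf; rw [Prod.mk.injEq] at h
        obtain ⟨h1', h2'⟩ := h; subst h1'; subst h2'
        constructor <;> nlinarith
    case E4 =>
        obtain ⟨t, ht, h⟩ := hf; rw [Prod.mk.injEq] at h
        obtain ⟨h1', h2'⟩ := h; subst h1'; subst h2'
        exfalso; nlinarith
    case E5 =>
        obtain ⟨t, ht, h⟩ := hf; rw [Prod.mk.injEq] at h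
        obtain ⟨h1', h2'⟩ := h; subst h1'; subst h2'
        exfalso; nlinarith
    case E6 =>
        obtain ⟨t, ht, h⟩ := hf; rw [Prod.mk.injEq] at h
        obtain ⟨h1', h2'⟩ := h; subst h1'; subst h2'
        exfalso; nlinarith
    case J0 => obtain ⟨hfy, hfx⟩ := hf; constructor <;> nlinarith
    case NEG => obtain ⟨hfy, hfx⟩ := hf; exfalso; nlinarith
    case K1 => exact ⟨by nlinarith [hf.1], by nlinarith [hf.2.2.1]⟩
    case K2 => exact ⟨hf.1, by nlinarith [hf.2.1, hf.2.2.1]⟩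
    case K3 => exact ⟨by nlinarith [hf.1], by nlinarith [hf.2.2.1]⟩
    case K4 => exfalso; nlinarith [hf.2.2.1]
    case K5 => exfalso; nlinarith [hf.2.2.1]
    case K6 => exfalso; nlinarith [hf.2.2.1]
  · exfalso; clear h
    cases σ <;> simp only [F, Prod.neg_mk] at hf
    case H =>
        obtain ⟨t, ht, h⟩ := hf; rw [Prod.mk.injEq] at h; nlinarith [h.2, neg_eq_iff_eq_neg.mp h.2]
    case V => obtain ⟨t, ht, h⟩ := hf; rw [Prod.mk.injEq] at h; nlinarith [h.2]
    case E1 => obtain ⟨t, ht, h⟩ := hf; rw [Prod.mk.injEq] at h; nlinarith [h.2]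
    case E2 => obtain ⟨t, ht, h⟩ := hf; rw [Prod.mk.injEq] at h; nlinarith [h.2]
    case E3 => obtain ⟨t, ht, h⟩ := hf; rw [Prod.mk.injEq] at h; nlinarith [h.2]
    case E4 => obtain ⟨t, ht, h⟩ := hf; rw [Prod.mk.injEq] at h; nlinarith [h.2]
    case E5 => obtain ⟨t, ht, h⟩ := hf; rw [Prod.mk.injEq] at h; nlinarith [h.2]
    case E6 => obtain ⟨t, ht, h⟩ := hf; rw [Prod.mk.injEq] at h; nlinarith [h.2]
    case J0 => nlinarith [hf.1]
    case NEG => nlinarith [hf.1]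
    case K1 => nlinarith [hf.2.1]
    case K2 => nlinarith [hf.2.1]
    case K3 => nlinarith [hf.2.1]
    case K4 => nlinarith [hf.2.1]
    case K5 => nlinarith [hf.2.1]
    case K6 => nlinarith [hf.2.1]

/-! ### closure of Good under the generators -/

lemma closS {σ : St} {v : ℝ × ℝ} (h : Good σ v) : ∃ σ', Good σ' (mS v) := by
  cases h with
  | gH t ε ht hε =>
      refine ⟨.H, ?_⟩
      have : mS (ε*t, 0) = (ε*t, 0) := by
        simp only [mS]; exact pair_eq (by ring) (by ring)
      rw [this]; exact .gH t ε ht hε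
  | gV t ε ht hε =>
      refine ⟨.E1, ?_⟩
      have : mS (0, ε*t) = (ε*((2+√2)*t), ε*t) := by
        simp only [mS]; exact pair_eq (by ring) (by ring)
      rw [this]; exact .gE1 t ε ht hε
  | gE1 t ε ht hε => exact ⟨.J0, .gJ0 _ _ (.gE1 t ε ht hε) trivial⟩
  | gE2 t ε ht hε => exact ⟨.J0, .gJ0 _ _ (.gE2 t ε ht hε) trivial⟩
  | gE3 t ε ht hε => exact ⟨.J0, .gJ0 _ _ (.gE3 t ε ht hε) trivial⟩
  | gE4 t ε ht hε => exact ⟨.J0, .gJ0 _ _ (.gE4 t ε ht hε) trivial⟩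
  | gE5 t ε ht hε => exact ⟨.J0, .gJ0 _ _ (.gE5 t ε ht hε) trivial⟩
  | gE6 t ε ht hε => exact ⟨.J0, .gJ0 _ _ (.gE6 t ε ht hε) trivial⟩
  | gJ0 σ w hw hσ => exact ⟨.J0, .gJ0S _ (.gJ0 σ w hw hσ)⟩
  | gJ0S w hw => exact ⟨.J0, .gJ0S _ (.gJ0S w hw)⟩
  | gN1 σ w hw hσ => exact ⟨σ, by rw [mS_mSi]; exact hw⟩
  | gNS w hw => exact ⟨.NEG, by rw [mS_mSi]; exact hw⟩
  | gNV w hw => exact ⟨.V, by rw [mS_mSi]; exact hw⟩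
  | gK1 w hw => exact ⟨.J0, .gJ0 _ _ (.gK1 w hw) trivial⟩
  | gK2 w hw => exact ⟨.J0, .gJ0 _ _ (.gK2 w hw) trivial⟩
  | gK3 w hw => exact ⟨.J0, .gJ0 _ _ (.gK3 w hw) trivial⟩
  | gK4 w hw => exact ⟨.J0, .gJ0 _ _ (.gK4 w hw) trivial⟩
  | gK5 w hw => exact ⟨.J0, .gJ0 _ _ (.gK5 w hw) trivial⟩
  | gK6 w hw => exact ⟨.J0, .gJ0 _ _ (.gK6 w hw) trivial⟩

lemma closSi {σ : St} {v : ℝ × ℝ} (h : Good σ v) : ∃ σ', Good σ' (mSi v) := by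
  cases h with
  | gH t ε ht hε =>
      refine ⟨.H, ?_⟩
      have : mSi (ε*t, 0) = (ε*t, 0) := by
        simp only [mSi]; exact pair_eq (by ring) (by ring)
      rw [this]; exact .gH t ε ht hε
  | gV t ε ht hε => exact ⟨.NEG, .gNV _ (.gV t ε ht hε)⟩
  | gE1 t ε ht hε =>
      refine ⟨.V, ?_⟩
      have : mSi (ε*((2+√2)*t), ε*t) = (0, ε*t) := by
        simp only [mSi]; exact pair_eq (by ring) (by ring)
      rw [this]; exact .gV t ε ht hε
  | gE2 t ε ht hε => exact ⟨.NEG, .gN1 _ _ (.gE2 t ε ht hε) trivial⟩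
  | gE3 t ε ht hε => exact ⟨.NEG, .gN1 _ _ (.gE3 t ε ht hε) trivial⟩
  | gE4 t ε ht hε => exact ⟨.NEG, .gN1 _ _ (.gE4 t ε ht hε) trivial⟩
  | gE5 t ε ht hε => exact ⟨.NEG, .gN1 _ _ (.gE5 t ε ht hε) trivial⟩
  | gE6 t ε ht hε => exact ⟨.NEG, .gN1 _ _ (.gE6 t ε ht hε) trivial⟩
  | gJ0 σ w hw hσ => exact ⟨σ, by rw [mSi_mS]; exact hw⟩
  | gJ0S w hw => exact ⟨.J0, by rw [mSi_mS]; exact hw⟩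
  | gN1 σ w hw hσ => exact ⟨.NEG, .gNS _ (.gN1 σ w hw hσ)⟩
  | gNS w hw => exact ⟨.NEG, .gNS _ (.gNS w hw)⟩
  | gNV w hw => exact ⟨.NEG, .gNS _ (.gNV w hw)⟩
  | gK1 w hw => exact ⟨.NEG, .gN1 _ _ (.gK1 w hw) trivial⟩
  | gK2 w hw => exact ⟨.NEG, .gN1 _ _ (.gK2 w hw) trivial⟩
  | gK3 w hw => exact ⟨.NEG, .gN1 _ _ (.gK3 w hw) trivial⟩
  | gK4 w hw => exact ⟨.NEG, .gN1 _ _ (.gK4 w hw) trivial⟩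
  | gK5 w hw => exact ⟨.NEG, .gN1 _ _ (.gK5 w hw) trivial⟩
  | gK6 w hw => exact ⟨.NEG, .gN1 _ _ (.gK6 w hw) trivial⟩

lemma closR {σ : St} {v : ℝ × ℝ} (h : Good σ v) : ∃ σ', Good σ' (mR v) := by
  have h1 := s2gt1; have h2 := s2
  cases h with
  | gH t ε ht hε =>
      refine ⟨.E2, ?_⟩
      have : mR (ε*t, 0) = (ε*((1+√2)*t), ε*t) := by
        simp only [mR]; exact pair_eq (by ring) (by ring)
      rw [this]; exact .gE2 t ε ht hε
  | gV t ε ht hε =>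
      refine ⟨.E1, ?_⟩
      have : mR (0, ε*t) = ((-ε)*((2+√2)*t), (-ε)*t) := by
        simp only [mR]; exact pair_eq (by ring) (by ring)
      rw [this]; exact .gE1 t (-ε) ht (by rcases hε with h|h <;> simp [h])
  | gE1 t ε ht hε =>
      refine ⟨.E3, ?_⟩
      have : mR (ε*((2+√2)*t), ε*t) = (ε*(2*((1+√2)*t)), ε*((1+√2)*t)) := by
        simp only [mR]
        exact pair_eq (by linear_combination (ε*t) * s2) (by ring)
      rw [this]; exact .gE3 ((1+√2)*t) ε (by nlinarith) hε
  | gE2 t ε ht hε =>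
      refine ⟨.E4, ?_⟩
      have : mR (ε*((1+√2)*t), ε*t) = (ε*((1+√2)*t), ε*(√2*t)) := by
        simp only [mR]
        exact pair_eq (by linear_combination (ε*t) * s2) (by ring)
      rw [this]; exact .gE4 t ε ht hε
  | gE3 t ε ht hε =>
      refine ⟨.E5, ?_⟩
      have : mR (ε*(2*t), ε*t) = (ε*(√2*t), ε*t) := by
        simp only [mR]; exact pair_eq (by ring) (by ring)
      rw [this]; exact .gE5 t ε ht hε
  | gE4 t ε ht hε =>
      refine ⟨.E6, ?_⟩
      have : mR (ε*((1+√2)*t), ε*(√2*t)) = (ε*t, ε*t) := by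
        simp only [mR]
        exact pair_eq (by ring) (by ring)
      rw [this]; exact .gE6 t ε ht hε
  | gE5 t ε ht hε =>
      refine ⟨.V, ?_⟩
      have : mR (ε*(√2*t), ε*t) = (0, ε*((√2-1)*t)) := by
        simp only [mR]
        exact pair_eq (by linear_combination (ε*t) * s2) (by ring)
      rw [this]; exact .gV ((√2-1)*t) ε (by nlinarith) hε
  | gE6 t ε ht hε =>
      refine ⟨.H, ?_⟩
      have : mR (ε*t, ε*t) = ((-ε)*t, 0) := by
        simp only [mR]; exact pair_eq (by ring) (by ring)
      rw [this]; exact .gH t (-ε) ht (by rcases hε with h|h <;> simp [h])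
  | gJ0 σ w hw hσ => exact ⟨.K2, .gK2 _ (.gJ0 σ w hw hσ)⟩
  | gJ0S w hw => exact ⟨.K2, .gK2 _ (.gJ0S w hw)⟩
  | gN1 σ w hw hσ => exact ⟨.K1, .gK1 _ (.gN1 σ w hw hσ)⟩
  | gNS w hw => exact ⟨.K1, .gK1 _ (.gNS w hw)⟩
  | gNV w hw => exact ⟨.K1, .gK1 _ (.gNV w hw)⟩
  | gK1 w hw => exact ⟨.K3, .gK3 _ (.gK1 w hw)⟩
  | gK2 w hw => exact ⟨.K4, .gK4 _ (.gK2 w hw)⟩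
  | gK3 w hw => exact ⟨.K5, .gK5 _ (.gK3 w hw)⟩
  | gK4 w hw => exact ⟨.K6, .gK6 _ (.gK4 w hw)⟩
  | gK5 w hw =>
      cases hw with
      | gK3 u hu =>
          cases hu with
          | gK1 z hz =>
              refine ⟨.NEG, ?_⟩
              rw [mR4]; exact good_neg hz
  | gK6 w hw =>
      cases hw with
      | gK4 u hu =>
          cases hu with
          | gK2 z hz =>
              refine ⟨.J0, ?_⟩
              rw [mR4]; exact good_neg hz

lemma closRi {σ : St} {v : ℝ × ℝ} (h : Good σ v) : ∃ σ', Good σ' (mRi v) := by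
  obtain ⟨σ1, h1⟩ := closR h
  obtain ⟨σ2, h2⟩ := closR h1
  obtain ⟨σ3, h3⟩ := closR h2
  exact ⟨σ3, by rw [mRi_eq]; exact good_neg h3⟩

/-! ### connecting the group action to the maps -/

def GoodAll (v : ℝ × ℝ) : Prop := ∃ σ, Good σ v

lemma act_mul (A B : Matrix (Fin 2) (Fin 2) ℝ) (v : ℝ × ℝ) :
    act (A * B) v = act A (act B v) := by
  simp only [act, Matrix.mul_apply, Fin.sum_univ_two]
  exact pair_eq (by ring) (by ring)

lemma act_one (v : ℝ × ℝ) : act (1 : Matrix (Fin 2) (Fin 2) ℝ) v = v := by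
  simp [act, Matrix.one_apply]

lemma act_R (v : ℝ × ℝ) : act (↑Rgen) v = mR v := by
  show act !![1+√2, -(2+√2); 1, -1] v = mR v
  simp only [act, mR, Matrix.of_apply, Matrix.cons_val', Matrix.cons_val_zero,
    Matrix.cons_val_one, Matrix.head_cons, Matrix.empty_val', Matrix.cons_val_fin_one,
    Matrix.head_fin_const]
  exact pair_eq (by ring) (by ring)

lemma act_S (v : ℝ × ℝ) : act (↑Sgen) v = mS v := by
  show act !![1, 2+√2; 0, 1] v = mS v
  simp only [act, mS, Matrix.of_apply, Matrix.cons_val', Matrix.cons_val_zero,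
    Matrix.cons_val_one, Matrix.head_cons, Matrix.empty_val', Matrix.cons_val_fin_one,
    Matrix.head_fin_const]
  exact pair_eq (by ring) (by ring)

lemma act_Ri (v : ℝ × ℝ) : act (↑(Rgen⁻¹)) v = mRi v := by
  have : (↑(Rgen⁻¹) : Matrix (Fin 2) (Fin 2) ℝ) = !![-1, 2+√2; -1, 1+√2] := by
    rw [Matrix.SpecialLinearGroup.coe_inv]
    show Matrix.adjugate !![1+√2, -(2+√2); 1, -1] = _
    rw [Matrix.adjugate_fin_two]
    norm_num
  rw [this]
  simp only [act, mRi, Matrix.of_apply, Matrix.cons_val', Matrix.cons_val_zero,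
    Matrix.cons_val_one, Matrix.head_cons, Matrix.empty_val', Matrix.cons_val_fin_one,
    Matrix.head_fin_const]
  exact pair_eq (by ring) (by ring)

lemma act_Si (v : ℝ × ℝ) : act (↑(Sgen⁻¹)) v = mSi v := by
  have : (↑(Sgen⁻¹) : Matrix (Fin 2) (Fin 2) ℝ) = !![1, -(2+√2); 0, 1] := by
    rw [Matrix.SpecialLinearGroup.coe_inv]
    show Matrix.adjugate !![1, 2+√2; 0, 1] = _
    rw [Matrix.adjugate_fin_two]
    norm_num
  rw [this]
  simp only [act, mSi, Matrix.of_apply, Matrix.cons_val', Matrix.cons_val_zero,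
    Matrix.cons_val_one, Matrix.head_cons, Matrix.empty_val', Matrix.cons_val_fin_one,
    Matrix.head_fin_const]
  exact pair_eq (by ring) (by ring)

lemma gamma_good {γ : SL2} (hγ : γ ∈ Γ) :
    (∀ v, GoodAll v → GoodAll (act (↑γ) v)) ∧
    (∀ v, GoodAll v → GoodAll (act (↑(γ⁻¹)) v)) := by
  refine Subgroup.closure_induction ?_ ?_ ?_ ?_ hγ
  · rintro x (rfl|rfl)
    · exact ⟨fun v ⟨σ, h⟩ => by rw [act_R]; exact closR h,
        fun v ⟨σ, h⟩ => by rw [act_Ri]; exact closRi h⟩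
    · exact ⟨fun v ⟨σ, h⟩ => by rw [act_S]; exact closS h,
        fun v ⟨σ, h⟩ => by rw [act_Si]; exact closSi h⟩
  · constructor <;>
      (intro v hv;
       simpa only [inv_one, Matrix.SpecialLinearGroup.coe_one, act_one] using hv)
  · rintro x y - - ⟨hx, hx'⟩ ⟨hy, hy'⟩
    constructor
    · intro v hv
      rw [Matrix.SpecialLinearGroup.coe_mul, act_mul]
      exact hx _ (hy _ hv)
    · intro v hv
      rw [show (x*y)⁻¹ = y⁻¹ * x⁻¹ from _root_.mul_inv_rev x y, Matrix.SpecialLinearGroup.coe_mul, act_mul]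
      exact hy' _ (hx' _ hv)
  · rintro x - ⟨hx, hx'⟩
    exact ⟨hx', by simpa only [inv_inv] using hx⟩

lemma lambda_good {v : ℝ × ℝ} (hv : v ∈ Lambda) : GoodAll v := by
  have base1 : GoodAll ((1:ℝ), (0:ℝ)) :=
    ⟨.H, by have : ((1:ℝ), (0:ℝ)) = ((1:ℝ)*1, 0) := by norm_num
            rw [this]; exact .gH 1 1 le_rfl (Or.inl rfl)⟩
  have base2 : GoodAll ((1+√2 : ℝ), (0:ℝ)) :=
    ⟨.H, by have : ((1+√2 : ℝ), (0:ℝ)) = ((1:ℝ)*(1+√2), 0) := by norm_num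
            rw [this]; exact .gH (1+√2) 1 (by linarith [s2pos]) (Or.inl rfl)⟩
  have base3 : GoodAll ((0:ℝ), (1:ℝ)) :=
    ⟨.V, by have : ((0:ℝ), (1:ℝ)) = (0, (1:ℝ)*1) := by norm_num
            rw [this]; exact .gV 1 1 le_rfl (Or.inl rfl)⟩
  have base4 : GoodAll ((0:ℝ), (√2:ℝ)) :=
    ⟨.V, by have : ((0:ℝ), (√2:ℝ)) = (0, (1:ℝ)*√2) := by norm_num
            rw [this]; exact .gV √2 1 s2gt1.le (Or.inl rfl)⟩
  rcases hv with ((⟨γ, hγ, rfl⟩|⟨γ, hγ, rfl⟩)|⟨γ, hγ, rfl⟩)|⟨γ, hγ, rfl⟩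
  · exact (gamma_good hγ).1 _ base1
  · exact (gamma_good hγ).1 _ base2
  · exact (gamma_good hγ).1 _ base3
  · exact (gamma_good hγ).1 _ base4

lemma act_M (a b : ℝ) (v : ℝ × ℝ) :
    act (Mmat a b) v = (a * v.1 + b * v.2, a⁻¹ * v.2) := by
  show act !![a, b; 0, a⁻¹] v = _
  simp only [act, Matrix.of_apply, Matrix.cons_val', Matrix.cons_val_zero,
    Matrix.cons_val_one, Matrix.head_cons, Matrix.empty_val', Matrix.cons_val_fin_one,
    Matrix.head_fin_const]
  exact pair_eq (by ring) (by ring)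

/-- On the subregion Ω_HF (0 < a ≤ 1, 1−(1+√2)a < b ≤ (1−(1+√2)a)/√2), the return time of the
horocycle flow, i.e. the least element of P(a,b), is √2/(a((1+√2)a + √2b)). -/
theorem return_time_HF (a b : ℝ) (ha0 : 0 < a) (ha1 : a ≤ 1)
    (hb0 : 1 - (1 + Real.sqrt 2) * a < b) (hb1 : b ≤ (1 - (1 + Real.sqrt 2) * a) / Real.sqrt 2) :
    IsLeast (P a b) (Real.sqrt 2 / (a * ((1 + Real.sqrt 2) * a + Real.sqrt 2 * b))) := by
  have h1 := s2gt1; have h2 := s2; have h0 := s2pos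
  set W : ℝ := (1 + √2) * a + √2 * b with hWdef
  have hb1' : √2 * b ≤ 1 - (1 + √2) * a := by
    have := (le_div_iff₀ h0).mp hb1
    linarith
  have ha2 : √2 - 1 < a := by nlinarith
  have hW0 : 0 < W := by nlinarith
  have hW1 : W ≤ 1 := by rw [hWdef]; linarith
  have haW : 0 < a * W := mul_pos ha0 hW0
  constructor
  · -- membership: the vector (1+√2, √2) realizes the least slope
    have hmemΓ : Rgen * Rgen ∈ Γ := by
      have : Rgen ∈ ({Rgen, Sgen} : Set SL2) := Set.mem_insert _ _
      exact mul_mem (Subgroup.subset_closure this) (Subgroup.subset_closure this)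
    have hact : act (↑(Rgen * Rgen)) ((1:ℝ), (0:ℝ)) = ((1+√2 : ℝ), (√2 : ℝ)) := by
      rw [Matrix.SpecialLinearGroup.coe_mul, act_mul, act_R, act_R]
      simp only [mR]
      exact pair_eq (by linear_combination s2) (by ring)
    have hu : ((1+√2 : ℝ), (√2 : ℝ)) ∈ Lambda := by
      refine Or.inl (Or.inl (Or.inl ?_))
      exact ⟨Rgen * Rgen, hmemΓ, hact.symm⟩
    refine ⟨((1+√2 : ℝ), (√2 : ℝ)), hu, ?_⟩
    rw [act_M]
    simp only
    have e1 : a * (1+√2) + b * √2 = W := by rw [hWdef]; ring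
    rw [e1]
    refine ⟨hW0, hW1, ?_, ?_⟩
    · positivity
    · rw [eq_div_iff (by positivity)]
      field_simp
  · -- lower bound
    rintro s ⟨u, hu, hpos1, hle1, hpos2, rfl⟩
    obtain ⟨x, y⟩ := u
    rw [act_M] at hpos1 hle1 hpos2 ⊢
    simp only at hpos1 hle1 hpos2 ⊢
    have hy : 0 < y := by
      by_contra hy
      push_neg at hy
      have : a⁻¹ * y ≤ 0 := mul_nonpos_of_nonneg_of_nonpos (by positivity) hy
      linarith
    rcases lt_or_ge ((1+√2) * y) (√2 * x) with hcone | hcone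
    · -- the cone case is impossible: it forces a*x+b*y > 1
      exfalso
      obtain ⟨σ, hg⟩ := lambda_good hu
      obtain ⟨hx1, hx2⟩ := good_avoid hg hy hcone
      simp only at hx1 hx2
      have hby : (1 - (1+√2)*a) * y < b * y := by
        exact mul_lt_mul_of_pos_right hb0 hy
      rcases le_or_gt 0 (x - (1+√2)*y) with hcase | hcase
      · have : (√2-1) * (x - (1+√2)*y) ≤ a * (x - (1+√2)*y) :=
          mul_le_mul_of_nonneg_right ha2.le hcase
        nlinarith
      · have : (1:ℝ) * (x - (1+√2)*y) ≤ a * (x - (1+√2)*y) := by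
          nlinarith
        nlinarith
    · -- slope is at least the claimed value
      rw [div_le_div_iff₀ haW hpos1]
      have hida : a⁻¹ * a = 1 := inv_mul_cancel₀ ha0.ne'
      have expand : a⁻¹ * y * (a * W) = y * W := by
        calc a⁻¹ * y * (a * W) = (a⁻¹ * a) * (y * W) := by ring
        _ = y * W := by rw [hida]; ring
      rw [expand, hWdef]
      nlinarith
end
end

section
/- Let E = {(a,b) ∈ ℝ² : 0 < a ≤ 1 and 1 − a < b ≤ 1}, and define Φ : E → ℝ² by Φ(a,b) = (b, b·⌊(1+a)/b⌋ − a). Then Φ is a bijection from E onto E, and Φ preserves two-dimensional Lebesgue measure: for every Lebesgue-measurable set A ⊆ E, the measure of Φ⁻¹(A) equals the measure of A. (Φ is the branch T_AH of the return map of the horocycle flow, mapping the subregion Ω_AH of the section onto Ω₂.) -/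
open Real MeasureTheory Set

noncomputable section

/-- The region E = Ω_AH = Ω₂ = {(a,b) : 0 < a ≤ 1, 1 − a < b ≤ 1}. -/
def E : Set (ℝ × ℝ) := {p | 0 < p.1 ∧ p.1 ≤ 1 ∧ 1 - p.1 < p.2 ∧ p.2 ≤ 1}

/-- The branch T_AH of the return map: Φ(a,b) = (b, b·⌊(1+a)/b⌋ − a). -/
def Φ (p : ℝ × ℝ) : ℝ × ℝ := (p.2, p.2 * (⌊(1 + p.1) / p.2⌋ : ℤ) - p.1)

/-!
Write `n = ⌊(1 + a)/b⌋` and `c = n b - a`, so `Φ (a, b) = (b, c)`. Since `(1 + c)/b = n + (1 - a)/b`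
with `0 ≤ (1 - a)/b < 1`, the floor is unchanged, so applying `Φ` to `(c, b)` returns `(b, a)`:
`swap ∘ Φ` is an involution of `E`, whence the bijectivity. On each level set of the floor, `Φ` is
the map `(a, b) ↦ (b, n b - a)`, a swap followed by a shear and a reflection, which preserves
Lebesgue measure. Summing over these countably many pieces, injectivity of `Φ` on `E` makes the
images disjoint, so `Φ` preserves the measure of every measurable subset of `E`.
-/

section PiecewiseMeasurePreserving

variable {α β ι : Type*} [MeasurableSpace α] [MeasurableSpace β] [MeasurableSpace ι] [Countable ι]
  [MeasurableSingletonClass ι] {μ : Measure α} {ν : Measure β}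

theorem measure_image_eq_of_eq_piecewise_measurePreserving {f : α → β} (g : ι → α ≃ᵐ β)
    (hg : ∀ i, MeasurePreserving (g i) μ ν) {k : α → ι} (hk : Measurable k)
    (hf : ∀ x, f x = g (k x) x) {t : Set α} (ht : MeasurableSet t) (hinj : InjOn f t) :
    ν (f '' t) = μ t := by
  set piece : ι → Set α := fun i => t ∩ k ⁻¹' {i}
  have hpiece : ∀ i, MeasurableSet (piece i) := fun i => ht.inter (hk (measurableSet_singleton i))
  have hdisj : Pairwise (Function.onFun Disjoint piece) := fun i j hij =>
    ((disjoint_singleton.2 hij).preimage k).mono inter_subset_right inter_subset_right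
  have hunion : ⋃ i, piece i = t := by ext x; simp [piece]
  have himage : ∀ i, f '' piece i = g i '' piece i := fun i =>
    image_congr fun x hx => by rw [hf, show k x = i from hx.2]
  calc ν (f '' t) = ∑' i, ν (f '' piece i) := by
        rw [← hunion, image_iUnion]
        refine measure_iUnion (fun i j hij => (hdisj hij).image hinj ?_ ?_) fun i => ?_
        · exact hunion ▸ subset_iUnion piece i
        · exact hunion ▸ subset_iUnion piece j
        · rw [himage]; exact (g i).measurableSet_image.2 (hpiece i)
    _ = ∑' i, μ (piece i) := by
        refine tsum_congr fun i => ?_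
        rw [himage, MeasurableEquiv.image_eq_preimage_symm]
        exact (hg i).symm.measure_preimage_equiv _
    _ = μ t := by rw [← measure_iUnion hdisj hpiece, hunion]

end PiecewiseMeasurePreserving

def swapShear (c : ℝ) : ℝ × ℝ ≃ᵐ ℝ × ℝ where
  toFun p := (p.2, c * p.2 - p.1)
  invFun q := (c * q.1 - q.2, q.1)
  left_inv p := by simp
  right_inv q := by simp
  measurable_toFun := measurable_snd.prodMk ((measurable_snd.const_mul c).sub measurable_fst)
  measurable_invFun := ((measurable_fst.const_mul c).sub measurable_snd).prodMk measurable_fst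

theorem measurePreserving_swapShear (c : ℝ) :
    MeasurePreserving (swapShear c) (volume : Measure (ℝ × ℝ)) volume := by
  have hswap : MeasurePreserving (Prod.swap : ℝ × ℝ → ℝ × ℝ) volume volume := by
    rw [Measure.volume_eq_prod]; exact Measure.measurePreserving_swap
  have hshear : MeasurePreserving (fun p : ℝ × ℝ => (p.1, c * p.1 - p.2)) volume volume := by
    rw [Measure.volume_eq_prod]
    exact (MeasurePreserving.id volume).skew_product (by fun_prop)
      (Filter.Eventually.of_forall fun x => Measure.map_sub_left_eq_self volume (c * x))
  exact hshear.comp hswap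

theorem measurable_floor_one_add_fst_div_snd :
    Measurable fun p : ℝ × ℝ => ⌊(1 + p.1) / p.2⌋ :=
  Measurable.floor (by fun_prop)

theorem Φ_eq_swapShear (p : ℝ × ℝ) : Φ p = swapShear (⌊(1 + p.1) / p.2⌋ : ℤ) p := by
  simp only [Φ, swapShear, MeasurableEquiv.coe_mk, Equiv.coe_fn_mk, mul_comm]

theorem measurable_Φ : Measurable Φ := by
  unfold Φ
  exact measurable_snd.prodMk ((measurable_snd.mul
    ((measurable_of_countable _).comp measurable_floor_one_add_fst_div_snd)).sub measurable_fst)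

theorem measurableSet_E : MeasurableSet E := by
  exact (measurableSet_lt measurable_const measurable_fst).inter <|
    (measurableSet_le measurable_fst measurable_const).inter <|
    (measurableSet_lt (by fun_prop) measurable_snd).inter <|
    measurableSet_le measurable_snd measurable_const

theorem Φ_snd_mem_Ioc_and_floor_eq {p : ℝ × ℝ} (hp : p ∈ E) :
    (Φ p).2 ∈ Ioc (1 - p.2) 1 ∧ ⌊(1 + (Φ p).2) / p.2⌋ = ⌊(1 + p.1) / p.2⌋ := by
  obtain ⟨a, b⟩ := p
  obtain ⟨ha, ha1, hb, hb1⟩ := hp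
  dsimp only at ha ha1 hb hb1 ⊢
  have hb0 : 0 < b := by linarith
  set n := ⌊(1 + a) / b⌋
  have hn_le : b * n ≤ 1 + a := by
    have := Int.floor_le ((1 + a) / b); rwa [le_div_iff₀ hb0, mul_comm] at this
  have hlt_n : 1 + a < b * (n + 1) := by
    have := Int.lt_floor_add_one ((1 + a) / b); rwa [div_lt_iff₀ hb0, mul_comm] at this
  refine ⟨⟨by simp only [Φ]; linarith, by simp only [Φ]; linarith⟩, ?_⟩
  have hsplit : (1 + (Φ (a, b)).2) / b = n + (1 - a) / b := by
    simp only [Φ]; field_simp; ring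
  rw [hsplit, Int.floor_intCast_add, add_eq_left, Int.floor_eq_zero_iff]
  exact ⟨div_nonneg (by linarith) hb0.le, (div_lt_one hb0).2 (by linarith)⟩

theorem mapsTo_Φ : MapsTo Φ E E := fun p hp =>
  ⟨show 0 < p.2 by linarith [hp.2.1, hp.2.2.1], hp.2.2.2, (Φ_snd_mem_Ioc_and_floor_eq hp).1.1,
    (Φ_snd_mem_Ioc_and_floor_eq hp).1.2⟩

theorem swap_mem_E {p : ℝ × ℝ} (hp : p ∈ E) : p.swap ∈ E := by
  obtain ⟨h1, h2, h3, h4⟩ := hp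
  exact ⟨by dsimp; linarith, h4, by dsimp; linarith, h2⟩

theorem swap_Φ_swap_Φ {p : ℝ × ℝ} (hp : p ∈ E) : (Φ (Φ p).swap).swap = p := by
  obtain ⟨_, hfloor⟩ := Φ_snd_mem_Ioc_and_floor_eq hp
  obtain ⟨a, b⟩ := p
  simp only [Φ, Prod.swap_prod_mk] at hfloor ⊢
  rw [hfloor]
  simp

theorem bijOn_Φ : BijOn Φ E E := by
  refine InvOn.bijOn (f' := Prod.swap ∘ Φ ∘ Prod.swap) ⟨fun p hp => swap_Φ_swap_Φ hp, fun q hq => ?_⟩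
    mapsTo_Φ fun q hq => swap_mem_E (mapsTo_Φ (swap_mem_E hq))
  simpa using congrArg Prod.swap (swap_Φ_swap_Φ (swap_mem_E hq))

/-- Φ is a bijection of E onto E preserving two-dimensional Lebesgue measure. -/
theorem T_AH_bijective_measure_preserving :
    Set.BijOn Φ E E ∧
    ∀ A : Set (ℝ × ℝ), A ⊆ E → MeasurableSet A → volume (E ∩ Φ ⁻¹' A) = volume A := by
  refine ⟨bijOn_Φ, fun A hAE hA => ?_⟩
  have himage : Φ '' (E ∩ Φ ⁻¹' A) = A := by
    rw [image_inter_preimage, bijOn_Φ.image_eq, inter_eq_right.2 hAE]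
  rw [← measure_image_eq_of_eq_piecewise_measurePreserving (fun n : ℤ => swapShear n)
    (fun n => measurePreserving_swapShear n)
    measurable_floor_one_add_fst_div_snd Φ_eq_swapShear (measurableSet_E.inter (measurable_Φ hA))
    (bijOn_Φ.injOn.mono inter_subset_left), himage]

end
end

section
/- The iterated integral ∫₀¹ (∫_{1−x}^1 1/(xy) dy) dx equals π²/6. (This is the integral of the return time function over the subregions Ω_AH and Ω₂ of the Poincaré section.) -/
open Real MeasureTheory intervalIntegral

/-! For `0 < x < 1` the inner integral is `∫_{1-x}^1 dy/(xy) = -log(1-x)/x = ∑ xⁿ/(n+1)`; integrating the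
nonnegative series termwise over `(0,1]` gives `∑ 1/(n+1)² = ζ(2) = π²/6`. -/

lemma hasSum_one_div_nat_add_one_sq :
    HasSum (fun n : ℕ => 1 / ((n : ℝ) + 1) ^ 2) (π ^ 2 / 6) := by
  simpa using (hasSum_nat_add_iff' (f := fun n : ℕ => (1 : ℝ) / (n : ℝ) ^ 2) 1).2 hasSum_zeta_two

lemma intervalIntegral_one_div_mul {x : ℝ} (hx : x < 1) :
    (∫ y in (1 - x)..1, 1 / (x * y)) = -log (1 - x) / x := by
  have h0 : (0 : ℝ) ∉ Set.uIcc (1 - x) 1 := by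
    rintro h
    rcases Set.mem_uIcc.1 h with ⟨h, -⟩ | ⟨h, -⟩ <;> linarith
  simp_rw [← one_div_mul_one_div]
  rw [intervalIntegral.integral_const_mul, integral_one_div h0, one_div (1 - x), log_inv]
  ring

lemma hasSum_pow_div_nat_add_one {x : ℝ} (hx : |x| < 1) (hx0 : x ≠ 0) :
    HasSum (fun n : ℕ => x ^ n / ((n : ℝ) + 1)) (-log (1 - x) / x) := by
  refine ((hasSum_pow_div_log_of_abs_lt_one hx).div_const x).congr_fun fun n => ?_
  field_simp
  ring

lemma integral_pow_div_nat_add_one (n : ℕ) :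
    (∫ x in Set.Ioc (0 : ℝ) 1, x ^ n / ((n : ℝ) + 1)) = 1 / ((n : ℝ) + 1) ^ 2 := by
  rw [← intervalIntegral.integral_of_le zero_le_one, intervalIntegral.integral_div, integral_pow]
  field_simp
  simp

lemma integral_tsum_pow_div_nat_add_one :
    (∫ x in Set.Ioc (0 : ℝ) 1, ∑' n : ℕ, x ^ n / ((n : ℝ) + 1)) = π ^ 2 / 6 := by
  have hnorm : ∀ n : ℕ, (∫ x in Set.Ioc (0 : ℝ) 1, ‖x ^ n / ((n : ℝ) + 1)‖)
      = ∫ x in Set.Ioc (0 : ℝ) 1, x ^ n / ((n : ℝ) + 1) := fun n =>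
    setIntegral_congr_fun measurableSet_Ioc fun x hx =>
      norm_of_nonneg (div_nonneg (pow_nonneg hx.1.le n) n.cast_add_one_pos.le)
  have hsummable : Summable fun n : ℕ => ∫ x in Set.Ioc (0 : ℝ) 1, ‖x ^ n / ((n : ℝ) + 1)‖ := by
    simp_rw [hnorm, integral_pow_div_nat_add_one]
    exact hasSum_one_div_nat_add_one_sq.summable
  have hint : ∀ n : ℕ, IntegrableOn (fun x : ℝ => x ^ n / ((n : ℝ) + 1)) (Set.Ioc 0 1) :=
    fun n => (by fun_prop : Continuous fun x : ℝ => x ^ n / ((n : ℝ) + 1)).integrableOn_Ioc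
  rw [← integral_tsum_of_summable_integral_norm hint hsummable]
  simp_rw [integral_pow_div_nat_add_one]
  exact hasSum_one_div_nat_add_one_sq.tsum_eq

/-- The integral of the return time function 1/(xy) over the subregion Ω_AH (equivalently Ω₂)
of the Poincaré section equals π²/6. -/
theorem integral_AH :
    (∫ x in (0:ℝ)..1, ∫ y in (1 - x)..1, 1 / (x * y)) = Real.pi ^ 2 / 6 := by
  rw [intervalIntegral.integral_of_le zero_le_one, ← integral_tsum_pow_div_nat_add_one]
  refine setIntegral_congr_ae measurableSet_Ioc ?_
  filter_upwards [Measure.ae_ne volume (1 : ℝ)] with x hx1 hx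
  have hx1 : x < 1 := lt_of_le_of_ne hx.2 hx1
  rw [intervalIntegral_one_div_mul hx1,
    (hasSum_pow_div_nat_add_one (abs_lt.2 ⟨by linarith [hx.1], hx1⟩) hx.1.ne').tsum_eq]
end

section
/- The following two iterated integrals of the return time function over the subregion Ω_BD of the Poincaré section have the stated values: (i) ∫₀^{√2−1} (∫_{1−(1+√2)x}^{1−x} 1/(x(x+y)) dy) dx = Li₂(2−√2); (ii) ∫_{√2−1}^{1} (∫_{(1−(1+√2)x)/√2}^{1−x} 1/(x(x+y)) dy) dx = π²/6 − Li₂(√2−1) − ln(√2)·ln(√2−1). -/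
open Real MeasureTheory intervalIntegral

noncomputable section

/-- The real dilogarithm Li₂(x) = ∑_{k ≥ 1} x^k/k². -/
def Li2 (x : ℝ) : ℝ := ∑' k : ℕ, x ^ (k + 1) / ((k : ℝ) + 1) ^ 2

namespace Li2Aux

lemma sqrt2_sq : Real.sqrt 2 ^ 2 = 2 := Real.sq_sqrt (by norm_num)

lemma sqrt2_pos : 0 < Real.sqrt 2 := Real.sqrt_pos.2 (by norm_num)

lemma one_lt_sqrt2 : 1 < Real.sqrt 2 := by nlinarith [sqrt2_sq, sqrt2_pos]

lemma sqrt2_lt : Real.sqrt 2 < 1.5 := by nlinarith [sqrt2_sq, sqrt2_pos]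

lemma summable_inv_sq : Summable (fun k : ℕ => 1 / ((k : ℝ) + 1) ^ 2) := by
  have h := (summable_nat_add_iff 1).2 hasSum_zeta_two.summable
  refine h.congr fun n => ?_
  push_cast
  ring

lemma measurable_f1 : Measurable (fun x : ℝ => -Real.log (1 - x) / x) :=
  ((Real.measurable_log.comp (measurable_const.sub measurable_id)).neg).div measurable_id

lemma key_integral {b : ℝ} (hb0 : 0 ≤ b) (hb1 : b ≤ 1) :
    ∫ x in (0:ℝ)..b, -Real.log (1 - x) / x = Li2 b := by
  rw [intervalIntegral.integral_of_le hb0, MeasureTheory.integral_Ioc_eq_integral_Ioo]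
  have hcast : ∀ k : ℕ, ((k : ℝ) + 1) ≠ 0 := fun k => by positivity
  have hval : ∀ k : ℕ, ∫ x in Set.Ioo (0:ℝ) b, x ^ k / ((k : ℝ) + 1)
      = b ^ (k + 1) / ((k : ℝ) + 1) ^ 2 := by
    intro k
    rw [← MeasureTheory.integral_Ioc_eq_integral_Ioo, ← intervalIntegral.integral_of_le hb0,
      intervalIntegral.integral_div, integral_pow]
    have h := hcast k
    rw [zero_pow k.succ_ne_zero, sub_zero, div_div, ← pow_two]
  have hint : ∀ k : ℕ, IntegrableOn (fun x : ℝ => x ^ k / ((k : ℝ) + 1)) (Set.Ioo 0 b) volume := by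
    intro k
    have h := (intervalIntegral.intervalIntegrable_pow (μ := volume) (a := 0) (b := b) k).div_const
      ((k : ℝ) + 1)
    exact ((intervalIntegrable_iff_integrableOn_Ioc_of_le hb0).1 h).mono_set
      Set.Ioo_subset_Ioc_self
  have hnorm : ∀ k : ℕ, ∫ x in Set.Ioo (0:ℝ) b, ‖x ^ k / ((k : ℝ) + 1)‖
      = b ^ (k + 1) / ((k : ℝ) + 1) ^ 2 := by
    intro k
    rw [← hval k]
    refine MeasureTheory.setIntegral_congr_fun measurableSet_Ioo fun x hx => ?_
    rw [Real.norm_eq_abs, abs_of_nonneg (div_nonneg (pow_nonneg hx.1.le k) (by positivity))]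
  have heq : Set.EqOn (fun x : ℝ => -Real.log (1 - x) / x)
      (fun x : ℝ => ∑' k : ℕ, x ^ k / ((k : ℝ) + 1)) (Set.Ioo 0 b) := by
    intro x hx
    have hx0 : 0 < x := hx.1
    have hx1 : x < 1 := lt_of_lt_of_le hx.2 hb1
    have habs : |x| < 1 := by rw [abs_of_pos hx0]; exact hx1
    have h := (hasSum_pow_div_log_of_abs_lt_one habs).div_const x
    have h2 : HasSum (fun k : ℕ => x ^ k / ((k : ℝ) + 1)) (-Real.log (1 - x) / x) := by
      refine h.congr_fun fun k => ?_
      field_simp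
      ring
    exact h2.tsum_eq.symm
  rw [MeasureTheory.setIntegral_congr_fun measurableSet_Ioo heq,
    ← MeasureTheory.integral_tsum_of_summable_integral_norm hint ?_]
  · rw [Li2]
    exact tsum_congr hval
  · refine Summable.of_nonneg_of_le (fun k => ?_) (fun k => ?_) summable_inv_sq
    · rw [hnorm k]; positivity
    · rw [hnorm k]
      have h1 : b ^ (k + 1) ≤ 1 := pow_le_one₀ hb0 hb1
      have h2 : (0:ℝ) < ((k : ℝ) + 1) ^ 2 := by positivity
      rw [div_le_div_iff₀ h2 h2]
      nlinarith
  done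

lemma Li2_one : Li2 1 = Real.pi ^ 2 / 6 := by
  have h := hasSum_zeta_two
  have h0 := h.tsum_eq
  rw [Summable.tsum_eq_zero_add h.summable] at h0
  norm_num at h0
  rw [Li2, ← h0]
  refine tsum_congr fun k => ?_
  push_cast
  ring

lemma intInt1 : IntervalIntegrable (fun x : ℝ => -Real.log (1 - x) / x) volume 0
    (Real.sqrt 2 - 1) := by
  have hs0 : (0:ℝ) ≤ Real.sqrt 2 - 1 := by nlinarith [one_lt_sqrt2]
  refine IntervalIntegrable.mono_fun' (g := fun _ => (2:ℝ)) intervalIntegrable_const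
    measurable_f1.aestronglyMeasurable ?_
  rw [Set.uIoc_of_le hs0]
  refine (MeasureTheory.ae_restrict_iff' measurableSet_Ioc).2 (Filter.Eventually.of_forall ?_)
  intro x hx
  have hx0 : 0 < x := hx.1
  have hx1 : x ≤ Real.sqrt 2 - 1 := hx.2
  have ht : 0 < 1 - x := by nlinarith [sqrt2_lt]
  have ht2 : (1:ℝ)/2 ≤ 1 - x := by nlinarith [sqrt2_lt]
  have hx12 : x ≤ 1/2 := by nlinarith [sqrt2_lt]
  have hlog : -Real.log (1 - x) ≤ 2 * x := by
    have h1 : Real.log (1 - x)⁻¹ ≤ (1 - x)⁻¹ - 1 :=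
      Real.log_le_sub_one_of_pos (by positivity)
    rw [Real.log_inv] at h1
    have hinv : 1 / (1 - x) ≤ 1 + 2 * x := by
      rw [div_le_iff₀ ht]
      nlinarith [mul_nonneg hx0.le (by linarith : (0:ℝ) ≤ 1 - 2*x)]
    rw [one_div] at hinv
    linarith
  have hnn : 0 ≤ -Real.log (1 - x) := by
    have := Real.log_nonpos (by linarith) (by linarith : 1 - x ≤ 1)
    linarith
  show ‖-Real.log (1 - x) / x‖ ≤ (2:ℝ)
  rw [Real.norm_eq_abs, abs_of_nonneg (div_nonneg hnn hx0.le), div_le_iff₀ hx0]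
  linarith

lemma intInt2 : IntervalIntegrable (fun x : ℝ => -Real.log (1 - x) / x) volume
    (Real.sqrt 2 - 1) 1 := by
  have hs0 : (0:ℝ) < Real.sqrt 2 - 1 := by nlinarith [one_lt_sqrt2]
  have hg0 : IntervalIntegrable (fun x : ℝ => x ^ (-(1/2) : ℝ)) volume
      (1 - (Real.sqrt 2 - 1)) 0 := intervalIntegrable_rpow' (by norm_num)
  have hg1 := (hg0.comp_sub_left 1).const_mul (5:ℝ)
  simp only [sub_sub_cancel, sub_zero] at hg1
  refine IntervalIntegrable.mono_fun' hg1 measurable_f1.aestronglyMeasurable ?_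
  rw [Set.uIoc_of_le (by nlinarith [sqrt2_lt] : Real.sqrt 2 - 1 ≤ 1)]
  refine (MeasureTheory.ae_restrict_iff' measurableSet_Ioc).2 (Filter.Eventually.of_forall ?_)
  intro x hx
  have hx0 : Real.sqrt 2 - 1 < x := hx.1
  have hx1 : x ≤ 1 := hx.2
  have hxpos : 0 < x := lt_trans hs0 hx0
  rcases eq_or_lt_of_le hx1 with h1 | h1
  · rw [h1]
    show ‖-Real.log (1 - 1) / 1‖ ≤ 5 * ((1:ℝ) - 1) ^ (-(1/2) : ℝ)
    rw [show (1:ℝ) - 1 = 0 by ring, Real.log_zero, Real.zero_rpow (by norm_num)]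
    simp
  · have ht : 0 < 1 - x := by linarith
    have hlog : -Real.log (1 - x) ≤ 2 * (1 - x) ^ (-(1/2) : ℝ) := by
      have h2 : Real.log ((1 - x) ^ (-(1/2) : ℝ)) ≤ (1 - x) ^ (-(1/2) : ℝ) - 1 :=
        Real.log_le_sub_one_of_pos (Real.rpow_pos_of_pos ht _)
      rw [Real.log_rpow ht] at h2
      nlinarith [Real.rpow_pos_of_pos ht (-(1/2) : ℝ)]
    have hnn : 0 ≤ -Real.log (1 - x) := by
      have := Real.log_nonpos (by linarith) (by linarith : 1 - x ≤ 1)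
      linarith
    show ‖-Real.log (1 - x) / x‖ ≤ 5 * (1 - x) ^ (-(1/2) : ℝ)
    rw [Real.norm_eq_abs, abs_of_nonneg (div_nonneg hnn hxpos.le), div_le_iff₀ hxpos]
    have hrp : 0 < (1 - x) ^ (-(1/2) : ℝ) := Real.rpow_pos_of_pos ht _
    have h14 : (1.4:ℝ) < Real.sqrt 2 := by nlinarith [sqrt2_sq, sqrt2_pos]
    have hxbig : 2/5 < x := by linarith
    nlinarith [mul_nonneg (by linarith : (0:ℝ) ≤ 5*x - 2) hrp.le]

lemma inner_eval {x A : ℝ} (hx : 0 < x) (hA : 0 < x + A) :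
    ∫ y in A..(1 - x), 1 / (x * (x + y)) = -Real.log (x + A) / x := by
  have h1 : ∀ y : ℝ, 1 / (x * (x + y)) = x⁻¹ * (x + y)⁻¹ := fun y => by
    rw [one_div, mul_inv]
  simp_rw [h1]
  rw [intervalIntegral.integral_const_mul,
    intervalIntegral.integral_comp_add_left (fun u : ℝ => u⁻¹) x,
    show x + (1 - x) = 1 by ring,
    integral_inv (Set.notMem_uIcc_of_lt hA one_pos), one_div, Real.log_inv]
  rw [inv_mul_eq_div, neg_div]

end Li2Aux

open Li2Aux in
/-- The two iterated integrals of the return time 1/(x(x+y)) over the subregion Ω_BD of the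
Poincaré section. -/
theorem integral_BD :
    (∫ x in (0:ℝ)..(Real.sqrt 2 - 1),
        ∫ y in (1 - (1 + Real.sqrt 2) * x)..(1 - x), 1 / (x * (x + y)))
      = Li2 (2 - Real.sqrt 2) ∧
    (∫ x in (Real.sqrt 2 - 1)..(1:ℝ),
        ∫ y in ((1 - (1 + Real.sqrt 2) * x) / Real.sqrt 2)..(1 - x), 1 / (x * (x + y)))
      = Real.pi ^ 2 / 6 - Li2 (Real.sqrt 2 - 1)
        - Real.log (Real.sqrt 2) * Real.log (Real.sqrt 2 - 1) := by
  have hs0 : (0:ℝ) < Real.sqrt 2 - 1 := by nlinarith [one_lt_sqrt2]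
  have hs1 : Real.sqrt 2 - 1 ≤ 1 := by nlinarith [sqrt2_lt]
  constructor
  · -- part (i)
    have hcongr : Set.EqOn
        (fun x : ℝ => ∫ y in (1 - (1 + Real.sqrt 2) * x)..(1 - x), 1 / (x * (x + y)))
        (fun x : ℝ => (fun u : ℝ => Real.sqrt 2 * (-Real.log (1 - u) / u)) (Real.sqrt 2 * x))
        (Set.uIcc 0 (Real.sqrt 2 - 1)) := by
      intro x hx
      rw [Set.uIcc_of_le hs0.le] at hx
      rcases eq_or_lt_of_le hx.1 with h0 | h0
      · simp [← h0]
      · have hA : 0 < x + (1 - (1 + Real.sqrt 2) * x) := by nlinarith [hx.2, sqrt2_sq, sqrt2_pos]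
        have := inner_eval h0 hA
        simp only
        rw [this, show x + (1 - (1 + Real.sqrt 2) * x) = 1 - Real.sqrt 2 * x by ring]
        field_simp
    rw [intervalIntegral.integral_congr hcongr,
      intervalIntegral.integral_comp_mul_left (fun u : ℝ => Real.sqrt 2 * (-Real.log (1 - u) / u)) sqrt2_pos.ne', mul_zero,
      show Real.sqrt 2 * (Real.sqrt 2 - 1) = 2 - Real.sqrt 2 by nlinarith [sqrt2_sq],
      smul_eq_mul, intervalIntegral.integral_const_mul,
      key_integral (by nlinarith [sqrt2_lt]) (by nlinarith [one_lt_sqrt2]),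
      ← mul_assoc, inv_mul_cancel₀ sqrt2_pos.ne', one_mul]
  · -- part (ii)
    have hEq : Set.EqOn
        (fun x : ℝ => ∫ y in ((1 - (1 + Real.sqrt 2) * x) / Real.sqrt 2)..(1 - x),
          1 / (x * (x + y)))
        (fun x : ℝ => -Real.log (1 - x) / x + Real.log (Real.sqrt 2) * x⁻¹)
        (Set.Ioo (Real.sqrt 2 - 1) 1) := by
      intro x hx
      have hx0 : 0 < x := lt_trans hs0 hx.1
      have hx1 : x < 1 := hx.2
      have hAval : x + (1 - (1 + Real.sqrt 2) * x) / Real.sqrt 2 = (1 - x) / Real.sqrt 2 := by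
        field_simp
        ring
      have hA : 0 < x + (1 - (1 + Real.sqrt 2) * x) / Real.sqrt 2 := by
        rw [hAval]
        have : (0:ℝ) < 1 - x := by linarith
        positivity
      simp only
      rw [inner_eval hx0 hA, hAval,
        Real.log_div (ne_of_gt (by linarith : (0:ℝ) < 1 - x)) sqrt2_pos.ne']
      ring
    rw [intervalIntegral.integral_of_le hs1, MeasureTheory.integral_Ioc_eq_integral_Ioo,
      MeasureTheory.setIntegral_congr_fun measurableSet_Ioo hEq,
      ← MeasureTheory.integral_Ioc_eq_integral_Ioo, ← intervalIntegral.integral_of_le hs1]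
    have hInv : IntervalIntegrable (fun x : ℝ => Real.log (Real.sqrt 2) * x⁻¹) volume
        (Real.sqrt 2 - 1) 1 := by
      have hbase : IntervalIntegrable (fun x : ℝ => x⁻¹) volume (Real.sqrt 2 - 1) 1 := by
        refine intervalIntegrable_inv (f := fun x : ℝ => x) (fun x hx => ?_) continuousOn_id
        rw [Set.uIcc_of_le hs1] at hx
        exact ne_of_gt (lt_of_lt_of_le hs0 hx.1)
      exact hbase.const_mul (Real.log (Real.sqrt 2))
    rw [intervalIntegral.integral_add intInt2 hInv, intervalIntegral.integral_const_mul,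
      integral_inv (Set.notMem_uIcc_of_lt hs0 one_pos), one_div, Real.log_inv]
    have hadj := intervalIntegral.integral_add_adjacent_intervals intInt1 intInt2
    rw [key_integral hs0.le hs1, key_integral zero_le_one le_rfl, Li2_one] at hadj
    have h2 : ∫ x in (Real.sqrt 2 - 1)..1, -Real.log (1 - x) / x
        = Real.pi ^ 2 / 6 - Li2 (Real.sqrt 2 - 1) := by linarith
    rw [h2]
    ring
end
end

section
/- The iterated integral ∫_{√2−1}^{1} (∫_{1−(1+√2)x}^{(1−(1+√2)x)/√2} √2/(x((1+√2)x + √2·y)) dy) dx equals Li₂(1/√2) − Li₂(1 − 1/√2) + ln(√2)·ln(√2−1). (This is the integral of the return time function over the subregion Ω_HF of the Poincaré section.) -/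
/-!
The inner integrand is `(1/x)·d/dy log((1+√2)x + √2y)`, and the linear form equals `1` at the upper
and `√2 - x` at the lower limit, so the inner integral is `-log(√2 - x)/x`. Substituting `x = √2 t`
and writing `log(√2(1 - t)) = log √2 + log(1 - t)` leaves `-log √2 ∫ dt/t` plus
`∫ -log(1 - t)/t dt`; expanding `-log(1 - t)/t = ∑ tᵏ/(k+1)` and integrating termwise gives the
difference of dilogarithms.
-/

open Real MeasureTheory intervalIntegral

noncomputable section

lemma summable_pow_succ_div_sq {r : ℝ} (hr : |r| ≤ 1) :
    Summable fun k : ℕ => r ^ (k + 1) / ((k : ℝ) + 1) ^ 2 := by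
  have hsq : Summable fun k : ℕ => 1 / ((k : ℝ) + 1) ^ 2 := by
    exact_mod_cast (summable_nat_add_iff 1).mpr (Real.summable_one_div_nat_pow.mpr one_lt_two)
  refine Summable.of_norm_bounded hsq fun k => ?_
  rw [norm_div, norm_pow, Real.norm_eq_abs, norm_of_nonneg (by positivity)]
  gcongr
  exact pow_le_one₀ (abs_nonneg r) hr

lemma hasSum_pow_div_succ {x : ℝ} (hx : |x| < 1) (hx0 : x ≠ 0) :
    HasSum (fun k : ℕ => x ^ k / ((k : ℝ) + 1)) (-log (1 - x) / x) := by
  have h := (hasSum_pow_div_log_of_abs_lt_one hx).div_const x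
  have e : (fun k : ℕ => x ^ (k + 1) / ((k : ℝ) + 1) / x) = fun k : ℕ => x ^ k / ((k : ℝ) + 1) :=
    funext fun k => by rw [pow_succ]; field_simp
  exact e ▸ h

lemma integral_neg_log_one_sub_div {a b : ℝ} (ha : 0 ≤ a) (hab : a ≤ b) (hb : b < 1) :
    ∫ x in a..b, -log (1 - x) / x = Li2 b - Li2 a := by
  have hb0 : 0 ≤ b := ha.trans hab
  have hsummable : ∀ r, 0 ≤ r → r < 1 → Summable fun k : ℕ => r ^ (k + 1) / ((k : ℝ) + 1) ^ 2 :=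
    fun r h0 h1 => summable_pow_succ_div_sq (abs_le.mpr ⟨by linarith, h1.le⟩)
  have hterm : ∀ k : ℕ, ∫ x in Set.Ioc a b, x ^ k / ((k : ℝ) + 1) =
      b ^ (k + 1) / ((k : ℝ) + 1) ^ 2 - a ^ (k + 1) / ((k : ℝ) + 1) ^ 2 := by
    intro k
    rw [← integral_of_le hab, intervalIntegral.integral_div, integral_pow]
    field_simp
  have hnorm : ∀ k : ℕ, ∫ x in Set.Ioc a b, ‖x ^ k / ((k : ℝ) + 1)‖ =
      b ^ (k + 1) / ((k : ℝ) + 1) ^ 2 - a ^ (k + 1) / ((k : ℝ) + 1) ^ 2 := by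
    intro k
    rw [← hterm k]
    refine setIntegral_congr_fun measurableSet_Ioc fun x hx => ?_
    have : 0 ≤ x := ha.trans hx.1.le
    exact norm_of_nonneg (by positivity)
  have hsum : Summable fun k : ℕ => ∫ x in Set.Ioc a b, ‖x ^ k / ((k : ℝ) + 1)‖ := by
    simp_rw [hnorm]
    exact (hsummable b hb0 hb).sub (hsummable a ha (hab.trans_lt hb))
  have hswap := integral_tsum_of_summable_integral_norm
    (fun k => ((continuous_pow k).div_const ((k : ℝ) + 1)).integrableOn_Ioc) hsum
  have hseries : ∀ x ∈ Set.Ioc a b, ∑' k : ℕ, x ^ k / ((k : ℝ) + 1) = -log (1 - x) / x :=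
    fun x hx => (hasSum_pow_div_succ (abs_lt.mpr ⟨by linarith [hx.1], hx.2.trans_lt hb⟩)
      (ha.trans_lt hx.1).ne').tsum_eq
  rw [integral_of_le hab, ← setIntegral_congr_fun measurableSet_Ioc hseries, ← hswap,
    funext hterm, (hsummable b hb0 hb).tsum_sub (hsummable a ha (hab.trans_lt hb)), Li2, Li2]

lemma integral_div_mul_add_mul (x p q u v : ℝ) (hq : q ≠ 0) (hu : 0 < p + q * u)
    (hv : 0 < p + q * v) :
    ∫ y in u..v, q / (x * (p + q * y)) = log ((p + q * v) / (p + q * u)) / x := by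
  have h : ∀ y, q / (x * (p + q * y)) = x⁻¹ * q * (p + q * y)⁻¹ := fun y => by
    field_simp
  simp_rw [h, intervalIntegral.integral_const_mul, integral_comp_add_mul (fun y => y⁻¹) hq,
    integral_inv_of_pos hu hv, smul_eq_mul]
  field_simp

lemma integral_neg_log_sub_div {a b c : ℝ} (ha : 0 < a) (hab : a ≤ b) (hbc : b < c) :
    ∫ x in a..b, -log (c - x) / x = -log c * log (b / a) + (Li2 (b / c) - Li2 (a / c)) := by
  have hc : 0 < c := by linarith
  have hmem : ∀ t ∈ Set.uIcc (a / c) (b / c), 0 < t ∧ t < 1 := by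
    intro t ht
    rw [Set.uIcc_of_le (div_le_div_of_nonneg_right hab hc.le)] at ht
    exact ⟨(div_pos ha hc).trans_le ht.1, ht.2.trans_lt ((div_lt_one hc).mpr hbc)⟩
  have hsplit : ∀ t ∈ Set.uIcc (a / c) (b / c),
      c • (-log (c - c * t) / (c * t)) = -log c * t⁻¹ + -log (1 - t) / t := by
    intro t ht
    obtain ⟨ht0, ht1⟩ := hmem t ht
    rw [← mul_one_sub, log_mul hc.ne' (by linarith), smul_eq_mul]
    field_simp
    ring
  have hinv : IntervalIntegrable (fun t => -log c * t⁻¹) volume (a / c) (b / c) :=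
    (ContinuousOn.inv₀ continuousOn_id fun t ht => (hmem t ht).1.ne').intervalIntegrable.const_mul _
  have hlog : IntervalIntegrable (fun t => -log (1 - t) / t) volume (a / c) (b / c) := by
    refine ContinuousOn.intervalIntegrable (ContinuousOn.div ?_ continuousOn_id
      fun t ht => (hmem t ht).1.ne')
    have hsub : ContinuousOn (fun t : ℝ => 1 - t) (Set.uIcc (a / c) (b / c)) := by fun_prop
    exact (hsub.log fun t ht => (sub_pos.mpr (hmem t ht).2).ne').neg
  calc ∫ x in a..b, -log (c - x) / x
      = c • ∫ t in a / c..b / c, -log (c - c * t) / (c * t) := by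
        rw [smul_integral_comp_mul_left (fun x => -log (c - x) / x), mul_div_cancel₀ _ hc.ne',
          mul_div_cancel₀ _ hc.ne']
    _ = ∫ t in a / c..b / c, (-log c * t⁻¹ + -log (1 - t) / t) := by
        rw [← intervalIntegral.integral_smul]
        exact integral_congr hsplit
    _ = -log c * log (b / a) + (Li2 (b / c) - Li2 (a / c)) := by
        rw [integral_add hinv hlog, intervalIntegral.integral_const_mul,
          integral_inv_of_pos (div_pos ha hc) (div_pos (ha.trans_le hab) hc),
          div_div_div_cancel_right₀ hc.ne', integral_neg_log_one_sub_div (div_pos ha hc).le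
            (div_le_div_of_nonneg_right hab hc.le) ((div_lt_one hc).mpr hbc)]

/-- The iterated integral of the return time √2/(x((1+√2)x+√2y)) over the subregion Ω_HF of the
Poincaré section. -/
theorem integral_HF :
    (∫ x in (Real.sqrt 2 - 1)..(1:ℝ),
        ∫ y in (1 - (1 + Real.sqrt 2) * x)..((1 - (1 + Real.sqrt 2) * x) / Real.sqrt 2),
          Real.sqrt 2 / (x * ((1 + Real.sqrt 2) * x + Real.sqrt 2 * y)))
      = Li2 (1 / Real.sqrt 2) - Li2 (1 - 1 / Real.sqrt 2)
        + Real.log (Real.sqrt 2) * Real.log (Real.sqrt 2 - 1) := by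
  have h2 : √2 ^ 2 = 2 := sq_sqrt zero_le_two
  have h1 : 1 < √2 := one_lt_sqrt_two
  have h2' : √2 < 2 := by nlinarith
  have hinner : ∀ x ∈ Set.uIcc (√2 - 1) 1,
      ∫ y in (1 - (1 + √2) * x)..((1 - (1 + √2) * x) / √2), √2 / (x * ((1 + √2) * x + √2 * y))
        = -log (√2 - x) / x := by
    intro x hx
    rw [Set.uIcc_of_le (by linarith)] at hx
    have hupper : (1 + √2) * x + √2 * ((1 - (1 + √2) * x) / √2) = 1 := by
      field_simp; ring
    have hlower : (1 + √2) * x + √2 * (1 - (1 + √2) * x) = √2 - x := by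
      linear_combination (-x) * h2
    rw [integral_div_mul_add_mul x _ _ _ _ (by positivity)
      (by rw [hlower]; linarith [hx.2]) (by rw [hupper]; exact one_pos), hupper, hlower,
      one_div, log_inv]
  rw [integral_congr hinner, integral_neg_log_sub_div (by linarith) (by linarith) h1,
    one_div (√2 - 1), log_inv, sub_div, div_self (by positivity)]
  ring
end
end

section
/- The dilogarithm identity Li₂(2−√2) + Li₂(1/√2) − Li₂(√2−1) − Li₂(1−1/√2) = π²/12 holds. -/
open Real MeasureTheory intervalIntegral

noncomputable section

open Set

/-!
The four arguments pair up under Euler's reflection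
Li₂(x) + Li₂(1 - x) = π²/6 - log x log (1 - x): 2 - √2 with √2 - 1, and 1/√2 with 1 - 1/√2.
Landen's identity Li₂(x) + Li₂(x/(x - 1)) = -½ log² (1 - x) at x = √2 - 1 brings in Li₂(-1/√2),
because (√2 - 1)/(√2 - 2) = -1/√2, and the duplication formula Li₂(s) + Li₂(-s) = ½ Li₂(s²) at
s = 1/√2 trades it for Li₂(1/√2) and Li₂(1/2) = π²/12 - ½ log² 2. Reflection and Landen's
identity follow from Li₂'(x) = -log (1 - x)/x: both sides have the same derivative, and they agree
at x = 0.
-/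

lemma summable_one_div_succ_sq : Summable (fun k : ℕ => 1 / ((k : ℝ) + 1) ^ 2) := by
  exact_mod_cast (summable_nat_add_iff 1).mpr (Real.summable_one_div_nat_pow.mpr one_lt_two)

lemma norm_li2_term_le {x : ℝ} (hx : |x| ≤ 1) (k : ℕ) :
    ‖x ^ (k + 1) / ((k : ℝ) + 1) ^ 2‖ ≤ 1 / ((k : ℝ) + 1) ^ 2 := by
  rw [norm_div, norm_pow, Real.norm_eq_abs, norm_of_nonneg (by positivity)]
  gcongr
  exact pow_le_one₀ (abs_nonneg x) hx

lemma summable_li2 {x : ℝ} (hx : |x| ≤ 1) :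
    Summable (fun k : ℕ => x ^ (k + 1) / ((k : ℝ) + 1) ^ 2) :=
  .of_norm_bounded summable_one_div_succ_sq (norm_li2_term_le hx)

lemma continuousOn_li2 : ContinuousOn Li2 (Icc (-1) 1) :=
  continuousOn_tsum (fun _ => by fun_prop) summable_one_div_succ_sq
    fun _ _ hx => norm_li2_term_le (abs_le.mpr hx) _

@[simp] lemma li2_zero : Li2 0 = 0 := by
  simp [Li2]

lemma li2_one : Li2 1 = π ^ 2 / 6 := by
  have h := (hasSum_nat_add_iff (f := fun n : ℕ => 1 / (n : ℝ) ^ 2) 1).mpr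
    (by simpa using hasSum_zeta_two)
  simp only [Li2, one_pow]
  exact_mod_cast h.tsum_eq

lemma hasDerivAt_li2 {x : ℝ} (hx : |x| < 1) (hx0 : x ≠ 0) :
    HasDerivAt Li2 (-log (1 - x) / x) x := by
  obtain ⟨r, hxr, hr1⟩ := exists_between hx
  have hr0 : 0 ≤ r := (abs_nonneg x).trans hxr.le
  rw [← Real.norm_eq_abs, ← dist_zero_right, ← Metric.mem_ball] at hxr
  have hterm (n : ℕ) (y : ℝ) : HasDerivAt (fun y : ℝ => y ^ (n + 1) / ((n : ℝ) + 1) ^ 2)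
      (y ^ n / ((n : ℝ) + 1)) y := by
    refine ((hasDerivAt_pow (n + 1) y).div_const _).congr_deriv ?_
    rw [Nat.add_sub_cancel]
    push_cast
    field_simp
  have hbound (n : ℕ) (y : ℝ) (hy : y ∈ Metric.ball 0 r) : ‖y ^ n / ((n : ℝ) + 1)‖ ≤ r ^ n := by
    rw [Metric.mem_ball, dist_zero_right] at hy
    rw [norm_div, norm_pow, norm_of_nonneg (by positivity : (0 : ℝ) ≤ n + 1)]
    calc ‖y‖ ^ n / (n + 1) ≤ ‖y‖ ^ n := div_le_self (by positivity) (by simp)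
      _ ≤ r ^ n := pow_le_pow_left₀ (norm_nonneg y) hy.le n
  have hsum : HasSum (fun n : ℕ => x ^ n / ((n : ℝ) + 1)) (-log (1 - x) / x) := by
    refine ((Real.hasSum_pow_div_log_of_abs_lt_one hx).div_const x).congr_fun fun n => ?_
    field_simp
    ring
  rw [← hsum.tsum_eq]
  exact hasDerivAt_tsum_of_isPreconnected (summable_geometric_of_lt_one (by positivity) hr1)
    Metric.isOpen_ball (convex_ball _ _).isPreconnected (fun n y _ => hterm n y) hbound hxr
    (summable_li2 hx.le) hxr

lemma li2_add_li2_neg {s : ℝ} (hs : |s| ≤ 1) : Li2 s + Li2 (-s) = Li2 (s ^ 2) / 2 := by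
  have hs2 : |s ^ 2| ≤ 1 := by rw [abs_pow]; exact pow_le_one₀ (abs_nonneg s) hs
  have hsum := (summable_li2 hs).hasSum.add (summable_li2 (x := -s) (by rwa [abs_neg])).hasSum
  have heven : HasSum (fun k : ℕ => s ^ (2 * k + 1) / ((2 * k : ℕ) + 1 : ℝ) ^ 2
      + (-s) ^ (2 * k + 1) / ((2 * k : ℕ) + 1 : ℝ) ^ 2) 0 := by
    simp_rw [(odd_two_mul_add_one _).neg_pow, neg_div, add_neg_cancel]
    exact hasSum_zero
  have hodd : HasSum (fun k : ℕ => s ^ (2 * k + 1 + 1) / ((2 * k + 1 : ℕ) + 1 : ℝ) ^ 2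
      + (-s) ^ (2 * k + 1 + 1) / ((2 * k + 1 : ℕ) + 1 : ℝ) ^ 2) (Li2 (s ^ 2) / 2) := by
    refine ((summable_li2 hs2).hasSum.div_const 2).congr_fun fun k => ?_
    rw [show 2 * k + 1 + 1 = 2 * (k + 1) by ring, (even_two_mul (k + 1)).neg_pow, pow_mul]
    push_cast
    field_simp
    ring
  simpa [Li2] using hsum.unique (heven.even_add_odd hodd)

lemma eq_of_hasDerivAt_zero {f : ℝ → ℝ} {a b : ℝ} (hab : a ≤ b)
    (hf : ContinuousOn f (Icc a b)) (hf' : ∀ x ∈ Ioo a b, HasDerivAt f 0 x) : f b = f a := by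
  rcases hab.eq_or_lt with rfl | hab
  · rfl
  obtain ⟨c, -, hc⟩ := exists_hasDerivAt_eq_slope f (fun _ => 0) hab hf hf'
  rw [eq_comm, div_eq_zero_iff, sub_eq_zero] at hc
  exact hc.resolve_right (sub_ne_zero.mpr hab.ne')

lemma continuousAt_log_mul_log_one_sub : ContinuousAt (fun y => log y * log (1 - y)) 0 := by
  have hd : DifferentiableAt ℝ (fun y => log (1 - y)) 0 := by
    fun_prop (disch := norm_num)
  -- at `y = 0` both sides vanish, as `log 0 = 0`
  have key : (fun y => log y * log (1 - y)) =
      fun y => (y * log y) * dslope (fun y => log (1 - y)) 0 y := by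
    ext y
    rcases eq_or_ne y 0 with rfl | hy
    · simp
    · rw [dslope_of_ne _ hy, slope_def_field]
      field_simp
      simp only [sub_zero, log_one]
      ring
  rw [key]
  exact Real.continuous_mul_log.continuousAt.mul (continuousAt_dslope_same.mpr hd)

lemma hasDerivAt_li2_add_li2_one_sub {x : ℝ} (hx : x ∈ Ioo 0 1) :
    HasDerivAt (fun y => Li2 y + Li2 (1 - y) + log y * log (1 - y)) 0 x := by
  obtain ⟨hx0, hx1⟩ := hx
  have hx1' : 0 < 1 - x := sub_pos.mpr hx1
  have h1 := hasDerivAt_li2 (abs_lt.mpr ⟨by linarith, hx1⟩) hx0.ne'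
  have h2 := (hasDerivAt_li2 (abs_lt.mpr ⟨by linarith, by linarith⟩) hx1'.ne').comp x
    ((hasDerivAt_id x).const_sub 1)
  have h3 := (Real.hasDerivAt_log hx0.ne').mul
    ((Real.hasDerivAt_log hx1'.ne').comp x ((hasDerivAt_id x).const_sub 1))
  refine ((h1.add h2).add h3).congr_deriv ?_
  simp only [Function.comp_apply, sub_sub_cancel]
  field_simp
  ring

lemma li2_add_li2_one_sub {x : ℝ} (hx : x ∈ Ioo 0 1) :
    Li2 x + Li2 (1 - x) + log x * log (1 - x) = π ^ 2 / 6 := by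
  -- with `log 0 = 0` the left-hand side is continuous at `0`, where it takes the value `Li2 1`
  have hcont : ContinuousOn (fun y => Li2 y + Li2 (1 - y) + log y * log (1 - y)) (Icc 0 x) := by
    refine ((continuousOn_li2.mono ?_).add (continuousOn_li2.comp (by fun_prop) ?_)).add ?_
    · exact fun y hy => ⟨by linarith [hy.1], hy.2.trans hx.2.le⟩
    · exact fun y hy => ⟨by linarith [hy.2, hx.2], by linarith [hy.1]⟩
    intro y hy
    rcases hy.1.eq_or_lt with rfl | hy0
    · exact continuousAt_log_mul_log_one_sub.continuousWithinAt
    · have : 1 - y ≠ 0 := by linarith [hy.2, hx.2]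
      exact ContinuousAt.continuousWithinAt (by fun_prop (disch := positivity))
  have := eq_of_hasDerivAt_zero hx.1.le hcont
    fun y hy => hasDerivAt_li2_add_li2_one_sub ⟨hy.1, hy.2.trans hx.2⟩
  simpa [li2_one] using this

lemma hasDerivAt_li2_add_li2_div_sub_one {x : ℝ} (hx : x ∈ Ioo 0 (1 / 2)) :
    HasDerivAt (fun y => Li2 y + Li2 (y / (y - 1)) + log (1 - y) ^ 2 / 2) 0 x := by
  obtain ⟨hx0, hx2⟩ := hx
  have hx1 : x - 1 ≠ 0 := by linarith
  have hx1' : 1 - x ≠ 0 := by linarith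
  have hu : x / (x - 1) ∈ Ioo (-1) 0 := by
    constructor
    · rw [lt_div_iff_of_neg (by linarith)]; linarith
    · exact div_neg_of_pos_of_neg hx0 (by linarith)
  have h1 := hasDerivAt_li2 (abs_lt.mpr ⟨by linarith, by linarith⟩) hx0.ne'
  have h2 := (hasDerivAt_li2 (abs_lt.mpr ⟨hu.1, by linarith [hu.2]⟩) hu.2.ne).comp x
    ((hasDerivAt_id x).div ((hasDerivAt_id x).sub_const 1) hx1)
  have h3 := (((Real.hasDerivAt_log hx1').comp x
    ((hasDerivAt_id x).const_sub 1)).pow 2).div_const 2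
  refine ((h1.add h2).add h3).congr_deriv ?_
  have h1u : 1 - x / (x - 1) = (1 - x)⁻¹ := by field_simp; ring
  simp only [Function.comp_apply, id, h1u, Real.log_inv]
  field_simp
  ring

lemma li2_add_li2_div_sub_one {x : ℝ} (hx : x ∈ Icc 0 (1 / 2)) :
    Li2 x + Li2 (x / (x - 1)) = -log (1 - x) ^ 2 / 2 := by
  have hcont : ContinuousOn (fun y => Li2 y + Li2 (y / (y - 1)) + log (1 - y) ^ 2 / 2)
      (Icc 0 x) := by
    have hmem (y) (hy : y ∈ Icc 0 x) : 0 ≤ y ∧ y ≤ 1 / 2 := ⟨hy.1, hy.2.trans hx.2⟩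
    refine ((continuousOn_li2.mono ?_).add (continuousOn_li2.comp ?_ ?_)).add ?_
    · exact fun y hy => ⟨by linarith [(hmem y hy).1], by linarith [(hmem y hy).2]⟩
    · exact continuousOn_id.div (by fun_prop) fun y hy => by linarith [(hmem y hy).2]
    · intro y hy
      obtain ⟨hy0, hy2⟩ := hmem y hy
      have hneg : y - 1 < 0 := by linarith
      exact ⟨by rw [le_div_iff_of_neg hneg]; linarith, by rw [div_le_iff_of_neg hneg]; linarith⟩
    · intro y hy
      have : 1 - y ≠ 0 := by linarith [(hmem y hy).2]
      exact ContinuousAt.continuousWithinAt (by fun_prop (disch := assumption))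
  have := eq_of_hasDerivAt_zero hx.1 hcont
    fun y hy => hasDerivAt_li2_add_li2_div_sub_one ⟨hy.1, hy.2.trans_le hx.2⟩
  simp only [zero_div, li2_zero, sub_zero, log_one] at this
  linear_combination this

lemma li2_one_half : Li2 (1 / 2) = π ^ 2 / 12 - log 2 ^ 2 / 2 := by
  have h := li2_add_li2_one_sub (x := 1 / 2) ⟨by norm_num, by norm_num⟩
  rw [show (1 : ℝ) - 1 / 2 = 1 / 2 by norm_num, one_div 2, Real.log_inv] at h
  rw [one_div]
  linear_combination h / 2

/-- A dilogarithm identity. -/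
theorem dilog_identity :
    Li2 (2 - Real.sqrt 2) + Li2 (1 / Real.sqrt 2) - Li2 (Real.sqrt 2 - 1)
      - Li2 (1 - 1 / Real.sqrt 2) = Real.pi ^ 2 / 12 := by
  set r := Real.sqrt 2
  have hr2 : r ^ 2 = 2 := sq_sqrt zero_le_two
  have hr1 : 1 < r := by nlinarith [sqrt_nonneg 2]
  have hr32 : r < 3 / 2 := by nlinarith
  have hs : 1 / r ∈ Ioo 0 1 := ⟨by positivity, (div_lt_one (by positivity)).mpr hr1⟩
  have hlog_r : log r = log 2 / 2 := log_sqrt zero_le_two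
  have hlog_a : log (2 - r) = log r + log (r - 1) := by
    rw [show 2 - r = r * (r - 1) by linear_combination -hr2, log_mul (by positivity) (by linarith)]
  have hlog_b : log (1 - 1 / r) = log (r - 1) - log r := by
    rw [show 1 - 1 / r = (r - 1) / r by field_simp, log_div (by linarith) (by positivity)]
  have ha := li2_add_li2_one_sub (x := 2 - r) ⟨by linarith, by linarith⟩
  have hb := li2_add_li2_one_sub hs
  have hc := li2_add_li2_div_sub_one (x := r - 1) ⟨by linarith, by linarith⟩
  have hd := li2_add_li2_neg (s := 1 / r) (abs_le.mpr ⟨by linarith [hs.1], hs.2.le⟩)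
  rw [show 1 - (2 - r) = r - 1 by ring, hlog_a] at ha
  rw [one_div r, log_inv, ← one_div, hlog_b] at hb
  rw [show (r - 1) / (r - 1 - 1) = -(1 / r) by
      field_simp [show r - 1 - 1 ≠ 0 by linarith]; linear_combination hr2,
    show 1 - (r - 1) = 2 - r by ring, hlog_a] at hc
  rw [div_pow, one_pow, hr2, li2_one_half] at hd
  rw [hlog_r] at ha hb hc
  linear_combination ha - hb - 2 * hc + 2 * hd
end
end
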